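/- arXiv:1205.2946 — 6 statements merged into one kernel-verified Lean document; each statement's English description precedes it below -/
import Mathlib

section
/- Let V be a finite-dimensional irreducible U'_q(L(sl₂))-module with dim V ≥ 2. Then there exist a positive integer d and s₀ ∈ {1,−1} such that K₀ is diagonalizable on V, every eigenvalue of K₀ is of the form s₀q^{2i−d} for some 0 ≤ i ≤ d, and V is the direct sum of the eigenspaces of K₀ corresponding to s₀q^{2i−d}, 0 ≤ i ≤ d. -/
open scoped TensorProduct

noncomputable section

/-- The `q`-integer `[t] = (q^t - q^(-t))/(q - q⁻¹)`. -/
def qnum (q : ℂ) (t : ℤ) : ℂ := (q ^ t - q ^ (-t)) / (q - q⁻¹)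

/-- The `q`-factorial `[t]! = [t][t-1]⋯[1]`. -/
def qfac (q : ℂ) (t : ℕ) : ℂ := ∏ k ∈ Finset.range t, qnum q ((k : ℤ) + 1)

/-- Commutator `[X,Y] = XY - YX`. -/
def brk {V : Type*} [AddCommGroup V] [Module ℂ V] (X Y : Module.End ℂ V) :
    Module.End ℂ V := X * Y - Y * X

/-- `q`-commutator `[X,Y]_t = t XY - t⁻¹ YX`. -/
def brkq {V : Type*} [AddCommGroup V] [Module ℂ V] (t : ℂ) (X Y : Module.End ℂ V) :
    Module.End ℂ V := t • (X * Y) - t⁻¹ • (Y * X)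

/-- A `U'_q(L(sl₂))`-module structure on a complex vector space `V`:
operators `(E₀⁺, E₁⁺, E₁⁻, K₀, K₁)` with `K₀, K₁` mutually inverse (hence invertible) and
the defining relations; `K₀ = K₁⁻¹` throughout. -/
structure IsUqpRep (q : ℂ) {V : Type*} [AddCommGroup V] [Module ℂ V]
    (E0 E1p E1m K0 K1 : Module.End ℂ V) : Prop where
  K0K1 : K0 * K1 = 1
  K1K0 : K1 * K0 = 1
  K0E0 : K0 * E0 = q ^ 2 • (E0 * K0)
  K1E1p : K1 * E1p = q ^ 2 • (E1p * K1)
  K1E1m : K1 * E1m = (q ^ 2)⁻¹ • (E1m * K1)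
  K1E0 : K1 * E0 = (q ^ 2)⁻¹ • (E0 * K1)
  K0E1p : K0 * E1p = (q ^ 2)⁻¹ • (E1p * K0)
  K0E1m : K0 * E1m = q ^ 2 • (E1m * K0)
  e1comm : E1p * E1m - E1m * E1p = (q - q⁻¹)⁻¹ • (K1 - K0)
  e0e1m : E0 * E1m = E1m * E0
  serre01 : brk E0 (brkq q⁻¹ E0 (brkq q E0 E1p)) = 0
  serre10 : brk E1p (brkq q⁻¹ E1p (brkq q E1p E0)) = 0

/-- `K₀` of the evaluation module `V(ℓ,a)`: `K₀ vᵢ = q^(2i-ℓ) vᵢ`. -/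
def evalK0 (q : ℂ) (ℓ : ℕ) : Module.End ℂ (Fin (ℓ + 1) → ℂ) :=
  (Matrix.diagonal fun i : Fin (ℓ + 1) => q ^ (2 * (i : ℤ) - ℓ)).mulVecLin

/-- `K₁` of the evaluation module `V(ℓ,a)`: `K₁ vᵢ = q^(ℓ-2i) vᵢ`. -/
def evalK1 (q : ℂ) (ℓ : ℕ) : Module.End ℂ (Fin (ℓ + 1) → ℂ) :=
  (Matrix.diagonal fun i : Fin (ℓ + 1) => q ^ ((ℓ : ℤ) - 2 * i)).mulVecLin

/-- `E₀⁺` of the evaluation module `V(ℓ,a)`: `E₀⁺ vᵢ = a q [i+1] vᵢ₊₁`. -/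
def evalE0 (q a : ℂ) (ℓ : ℕ) : Module.End ℂ (Fin (ℓ + 1) → ℂ) :=
  (Matrix.of fun j i : Fin (ℓ + 1) =>
    if (j : ℕ) = (i : ℕ) + 1 then a * q * qnum q ((i : ℤ) + 1) else 0).mulVecLin

/-- `E₁⁺` of the evaluation module `V(ℓ,a)`: `E₁⁺ vᵢ = [ℓ-i+1] vᵢ₋₁`. -/
def evalE1p (q : ℂ) (ℓ : ℕ) : Module.End ℂ (Fin (ℓ + 1) → ℂ) :=
  (Matrix.of fun j i : Fin (ℓ + 1) =>
    if (i : ℕ) = (j : ℕ) + 1 then qnum q ((ℓ : ℤ) - (i : ℤ) + 1) else 0).mulVecLin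

/-- `E₁⁻` of the evaluation module `V(ℓ,a)`: `E₁⁻ vᵢ = [i+1] vᵢ₊₁`. -/
def evalE1m (q : ℂ) (ℓ : ℕ) : Module.End ℂ (Fin (ℓ + 1) → ℂ) :=
  (Matrix.of fun j i : Fin (ℓ + 1) =>
    if (j : ℕ) = (i : ℕ) + 1 then qnum q ((i : ℤ) + 1) else 0).mulVecLin

/-- Irreducibility: the only subspaces invariant under all five operators are `⊥` and `⊤`. -/
def IsIrred {V : Type*} [AddCommGroup V] [Module ℂ V]
    (E0 E1p E1m K0 K1 : Module.End ℂ V) : Prop :=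
  ∀ W : Submodule ℂ V, (∀ v ∈ W, E0 v ∈ W) → (∀ v ∈ W, E1p v ∈ W) →
    (∀ v ∈ W, E1m v ∈ W) → (∀ v ∈ W, K0 v ∈ W) → (∀ v ∈ W, K1 v ∈ W) →
    W = ⊥ ∨ W = ⊤

/-- Type `(1,1)`: `K₀` is diagonalizable with all eigenvalues of the form `q^(2i-d)`,
`0 ≤ i ≤ d`, i.e. the corresponding eigenspaces span. -/
def IsType11 (q : ℂ) {V : Type*} [AddCommGroup V] [Module ℂ V] (K0 : Module.End ℂ V) : Prop :=
  ∃ d : ℕ, ⨆ i : Fin (d + 1), Module.End.eigenspace K0 (q ^ (2 * (i : ℤ) - d)) = ⊤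

/-!
`E₁⁻` raises and `E₁⁺` lowers the eigenvalues of `K₀` by the factor `q²`. Take an eigenvalue `θ`
of `K₀` such that `q²θ` is not an eigenvalue, and an eigenvector `u`: then `E₁⁻ u = 0`, the string
`(E₁⁺)ᵏ u` terminates, and the `U_q(sl₂)`-relation between `E₁⁺` and `E₁⁻` at its last vector
forces `θ² = q^(2m)`, i.e. `θ = s₀ q^m` with `s₀ = ±1`. The sum of the eigenspaces of `K₀` for
`q^(2k) θ`, `k ∈ ℤ`, is invariant under all generators, hence is `V` by irreducibility; so `K₀` is
diagonalizable with finitely many eigenvalues `s₀ q^(m + 2k)`, which fit into a window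
`s₀ q^(2i - d)`, `0 ≤ i ≤ d`.
-/

open Module Module.End

section Powers

variable {G₀ : Type*} [GroupWithZero G₀] {q : G₀}

theorem zpow_injective_of_pow_ne_one (hq0 : q ≠ 0) (hq : ∀ n : ℕ, 0 < n → q ^ n ≠ 1) :
    Function.Injective (q ^ · : ℤ → G₀) := by
  have hQ : ¬IsOfFinOrder (Units.mk0 q hq0) := by
    rw [isOfFinOrder_iff_pow_eq_one]
    rintro ⟨n, hn, hQn⟩
    exact hq n hn (by simpa [Units.ext_iff] using hQn)
  intro a b hab
  exact injective_zpow_iff_not_isOfFinOrder.mpr hQ (Units.ext (by simpa using hab))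

theorem pow_injective_of_zpow_injective (hinj : Function.Injective (q ^ · : ℤ → G₀)) {k : ℤ}
    (hk : k ≠ 0) :
    Function.Injective (fun n : ℕ => (q ^ k) ^ n) := fun a b hab => by
  have := hinj (show q ^ (k * a) = q ^ (k * b) by simpa only [zpow_mul, zpow_natCast] using hab)
  simpa [hk] using this

theorem ne_zero_of_zpow_injective (hinj : Function.Injective (q ^ · : ℤ → G₀)) : q ≠ 0 :=
  fun h0 => by simpa [h0] using hinj.ne (show (1 : ℤ) ≠ 2 by decide)

end Powers

theorem sub_inv_ne_zero_of_zpow_injective {q : ℂ} (hinj : Function.Injective (q ^ · : ℤ → ℂ)) :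
    q - q⁻¹ ≠ 0 :=
  sub_ne_zero.mpr (by simpa using hinj.ne (show (1 : ℤ) ≠ -1 by decide))

theorem qnum_ne_zero {q : ℂ} (hinj : Function.Injective (q ^ · : ℤ → ℂ)) {t : ℤ} (ht : t ≠ 0) :
    qnum q t ≠ 0 :=
  div_ne_zero (sub_ne_zero.mpr (hinj.ne (by omega))) (sub_inv_ne_zero_of_zpow_injective hinj)

-- `E₁⁻ (E₁⁺)^(k+1) u = stringCoeff q θ k • (E₁⁺)^k u` when `K₀ u = θ u` and `E₁⁻ u = 0`.
def stringCoeff (q θ : ℂ) (k : ℕ) : ℂ :=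
  qnum q ((k : ℤ) + 1) * (θ * (q ^ k)⁻¹ - θ⁻¹ * q ^ k) / (q - q⁻¹)

theorem stringCoeff_zero {q : ℂ} (hq : q - q⁻¹ ≠ 0) (θ : ℂ) :
    stringCoeff q θ 0 = (θ - θ⁻¹) / (q - q⁻¹) := by
  simp [stringCoeff, qnum, hq]

theorem stringCoeff_succ {q : ℂ} (hq : q - q⁻¹ ≠ 0) (θ : ℂ) (k : ℕ) :
    stringCoeff q θ (k + 1) =
      stringCoeff q θ k - (q - q⁻¹)⁻¹ * ((q ^ 2) ^ (k + 1) * θ⁻¹ - ((q ^ 2)⁻¹) ^ (k + 1) * θ) := by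
  have hq0 : q ≠ 0 := by rintro rfl; simp at hq
  simp only [stringCoeff, qnum, zpow_add₀ hq0, zpow_neg, zpow_natCast, zpow_one, Nat.cast_add,
    Nat.cast_one, inv_pow, ← pow_mul]
  generalize θ⁻¹ = θ'
  field_simp
  ring

theorem sq_eq_one_of_stringCoeff_eq_zero {q θ : ℂ} (hinj : Function.Injective (q ^ · : ℤ → ℂ))
    {k : ℕ} (hθ : θ ≠ 0) (hk : stringCoeff q θ k = 0) : (θ * (q ^ k)⁻¹) ^ 2 = 1 := by
  have hq0 := ne_zero_of_zpow_injective hinj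
  have hweight : θ * (q ^ k)⁻¹ - θ⁻¹ * q ^ k = 0 := by
    simpa [stringCoeff, qnum_ne_zero hinj (by omega : (k : ℤ) + 1 ≠ 0),
      sub_inv_ne_zero_of_zpow_injective hinj] using hk
  field_simp at hweight ⊢
  linear_combination hweight

section Eigen

variable {K V : Type*} [Field K] [AddCommGroup V] [Module K V]

theorem Module.End.HasEigenvalue.ne_zero_of_mul_eq_one {f g : End K V} (hgf : g * f = 1) {μ : K}
    (hμ : f.HasEigenvalue μ) : μ ≠ 0 := by
  rintro rfl
  obtain ⟨v, hv⟩ := hμ.exists_hasEigenvector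
  have hfv : f v = 0 := by simpa using hv.apply_eq_smul
  exact hv.2 (by simpa [hfv] using (LinearMap.congr_fun hgf v).symm)

theorem Module.End.apply_eq_inv_smul_of_mul_eq_one {f g : End K V} (hgf : g * f = 1) {μ : K}
    (hμ : μ ≠ 0) {v : V} (hv : f v = μ • v) : g v = μ⁻¹ • v := by
  have hgfv : μ • g v = v := by simpa [hv] using LinearMap.congr_fun hgf v
  calc g v = μ⁻¹ • μ • g v := by rw [smul_smul, inv_mul_cancel₀ hμ, one_smul]
    _ = μ⁻¹ • v := by rw [hgfv]

theorem Module.End.map_eigenspace_le_of_mul_eq_smul {f e : End K V} {c : K}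
    (h : f * e = c • (e * f)) (μ : K) : (f.eigenspace μ).map e ≤ f.eigenspace (c * μ) := by
  rw [Submodule.map_le_iff_le_comap]
  intro v hv
  rw [Submodule.mem_comap, mem_eigenspace_iff] at *
  rw [← Module.End.mul_apply, h, LinearMap.smul_apply, Module.End.mul_apply, hv, map_smul,
    smul_smul]

theorem Module.End.pow_apply_mem_eigenspace_of_mul_eq_smul {f e : End K V} {c μ : K}
    (h : f * e = c • (e * f)) {v : V} (hv : v ∈ f.eigenspace μ) (n : ℕ) :
    (e ^ n) v ∈ f.eigenspace (c ^ n * μ) := by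
  induction n with
  | zero => simpa using hv
  | succ n ih =>
    rw [pow_succ' e, Module.End.mul_apply, pow_succ' c, mul_assoc]
    exact map_eigenspace_le_of_mul_eq_smul h _ ⟨_, ih, rfl⟩

theorem Module.End.exists_not_hasEigenvalue [FiniteDimensional K V] (f : End K V) {g : ℕ → K}
    (hg : Function.Injective g) : ∃ n, ¬f.HasEigenvalue (g n) := by
  by_contra! h
  exact Set.infinite_of_injective_forall_mem hg h f.finite_hasEigenvalue

theorem Module.End.exists_hasEigenvalue_not_hasEigenvalue_mul [FiniteDimensional K V]
    {f : End K V} {c μ : K} (hc : Function.Injective (c ^ · : ℕ → K)) (hμ0 : μ ≠ 0)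
    (hμ : f.HasEigenvalue μ) : ∃ θ, f.HasEigenvalue θ ∧ ¬f.HasEigenvalue (c * θ) := by
  by_contra! h
  obtain ⟨n, hn⟩ := f.exists_not_hasEigenvalue ((mul_left_injective₀ hμ0).comp hc)
  refine hn ?_
  clear hn
  induction n with
  | zero => simpa using hμ
  | succ n ih => simpa [pow_succ', mul_assoc] using h _ ih

theorem Module.End.exists_pow_apply_eq_zero_of_mul_eq_smul [FiniteDimensional K V]
    {f e : End K V} {c μ : K} (h : f * e = c • (e * f)) (hc : Function.Injective (c ^ · : ℕ → K))
    (hμ0 : μ ≠ 0) {v : V} (hv : v ∈ f.eigenspace μ) : ∃ n, (e ^ n) v = 0 := by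
  obtain ⟨n, hn⟩ := f.exists_not_hasEigenvalue ((mul_left_injective₀ hμ0).comp hc)
  rw [hasEigenvalue_iff, not_not] at hn
  exact ⟨n, (Submodule.mem_bot K).mp (hn ▸ pow_apply_mem_eigenspace_of_mul_eq_smul h hv n)⟩

theorem Module.End.mem_iSup_eigenspace_of_mul_eq_smul {ι : Type*} {f e : End K V} {c : K}
    (h : f * e = c • (e * f)) {g : ι → K} (hg : ∀ i, ∃ j, c * g i = g j) {v : V}
    (hv : v ∈ ⨆ i, f.eigenspace (g i)) : e v ∈ ⨆ i, f.eigenspace (g i) := by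
  have hmap : (⨆ i, f.eigenspace (g i)).map e ≤ ⨆ i, f.eigenspace (g i) := by
    rw [Submodule.map_iSup]
    refine iSup_le fun i => ?_
    obtain ⟨j, hj⟩ := hg i
    exact (map_eigenspace_le_of_mul_eq_smul h _).trans
      (hj ▸ le_iSup (fun j => f.eigenspace (g j)) j)
  exact hmap (Submodule.mem_map_of_mem hv)

theorem Module.End.HasEigenvalue.exists_eq_of_iSup_eigenspace_eq_top {ι : Type*} {f : End K V}
    {g : ι → K} (htop : ⨆ i, f.eigenspace (g i) = ⊤) {μ : K} (hμ : f.HasEigenvalue μ) :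
    ∃ i, g i = μ := by
  by_contra! hne
  refine hasEigenvalue_iff.mp hμ ((f.eigenspaces_iSupIndep μ).eq_bot_of_le ?_)
  calc f.eigenspace μ ≤ ⨆ i, f.eigenspace (g i) := htop ▸ le_top
    _ ≤ ⨆ (ν) (_ : ν ≠ μ), f.eigenspace ν := iSup_le fun i => le_iSup₂_of_le (g i) (hne i) le_rfl

theorem Module.End.iSup_eigenspace_eq_top_of_forall_exists {ι κ : Type*} {f : End K V}
    {g : ι → K} {g' : κ → K} (htop : ⨆ i, f.eigenspace (g i) = ⊤)
    (hg : ∀ i, f.HasEigenvalue (g i) → ∃ j, g i = g' j) : ⨆ j, f.eigenspace (g' j) = ⊤ := by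
  refine top_le_iff.mp (htop ▸ iSup_le fun i => ?_)
  by_cases hi : f.HasEigenvalue (g i)
  · obtain ⟨j, hj⟩ := hg i hi
    exact hj ▸ le_iSup (fun j => f.eigenspace (g' j)) j
  · rw [hasEigenvalue_iff, not_not] at hi
    simp [hi]

end Eigen

theorem Set.Finite.exists_forall_add_two_mul_eq_two_mul_sub {S : Set ℤ} (hS : S.Finite) (m : ℕ) :
    ∃ d : ℕ, 0 < d ∧ ∀ k ∈ S, ∃ i : ℕ, i ≤ d ∧ (m : ℤ) + 2 * k = 2 * i - d := by
  obtain ⟨a, ha⟩ := hS.bddAbove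
  obtain ⟨b, hb⟩ := hS.bddBelow
  refine ⟨m + 2 * (a.natAbs + b.natAbs) + 2, by omega, fun k hk => ?_⟩
  have hka := ha hk
  have hkb := hb hk
  exact ⟨(m + k + a.natAbs + b.natAbs + 1).toNat, by omega, by omega⟩

section LowestWeight

variable {V : Type*} [AddCommGroup V] [Module ℂ V] {q θ : ℂ} {E F K K' : End ℂ V} {u : V}

theorem apply_pow_succ_eq_stringCoeff_smul (hq : q - q⁻¹ ≠ 0)
    (hKE : K * E = (q ^ 2)⁻¹ • (E * K)) (hK'E : K' * E = q ^ 2 • (E * K'))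
    (hEF : E * F - F * E = (q - q⁻¹)⁻¹ • (K' - K))
    (hKu : K u = θ • u) (hK'u : K' u = θ⁻¹ • u) (hFu : F u = 0) (k : ℕ) :
    F ((E ^ (k + 1)) u) = stringCoeff q θ k • (E ^ k) u := by
  have hFE : ∀ v, F (E v) = E (F v) - (q - q⁻¹)⁻¹ • (K' v - K v) := fun v => by
    have := LinearMap.congr_fun hEF v
    simp only [LinearMap.sub_apply, Module.End.mul_apply, LinearMap.smul_apply] at this
    rw [← this]
    abel
  have hK : ∀ k, K ((E ^ k) u) = (((q ^ 2)⁻¹) ^ k * θ) • (E ^ k) u := fun k =>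
    mem_eigenspace_iff.mp
      (pow_apply_mem_eigenspace_of_mul_eq_smul hKE (mem_eigenspace_iff.mpr hKu) k)
  have hK' : ∀ k, K' ((E ^ k) u) = ((q ^ 2) ^ k * θ⁻¹) • (E ^ k) u := fun k =>
    mem_eigenspace_iff.mp
      (pow_apply_mem_eigenspace_of_mul_eq_smul hK'E (mem_eigenspace_iff.mpr hK'u) k)
  induction k with
  | zero =>
    rw [pow_one, hFE, hFu, map_zero, hKu, hK'u, stringCoeff_zero hq, pow_zero,
      Module.End.one_apply]
    module
  | succ k ih =>
    rw [pow_succ' E, Module.End.mul_apply, hFE, ih, map_smul, ← Module.End.mul_apply, ← pow_succ',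
      hK, hK', stringCoeff_succ hq]
    module

theorem exists_sign_mul_pow_of_lowest_weight [FiniteDimensional ℂ V]
    (hinj : Function.Injective (q ^ · : ℤ → ℂ))
    (hKE : K * E = (q ^ 2)⁻¹ • (E * K)) (hK'E : K' * E = q ^ 2 • (E * K'))
    (hEF : E * F - F * E = (q - q⁻¹)⁻¹ • (K' - K))
    (hθ : θ ≠ 0) (hu : u ≠ 0) (hKu : K u = θ • u) (hK'u : K' u = θ⁻¹ • u) (hFu : F u = 0) :
    ∃ (s : ℂ) (m : ℕ), (s = 1 ∨ s = -1) ∧ θ = s * q ^ m := by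
  classical
  have hex := exists_pow_apply_eq_zero_of_mul_eq_smul hKE
    (by simpa using pow_injective_of_zpow_injective hinj (k := -2) (by norm_num)) hθ
    (mem_eigenspace_iff.mpr hKu)
  obtain ⟨m, hm⟩ : ∃ m, Nat.find hex = m + 1 :=
    Nat.exists_eq_succ_of_ne_zero fun h0 => hu (by simpa [h0] using Nat.find_spec hex)
  have hEm : (E ^ m) u ≠ 0 := Nat.find_min hex (by omega)
  have hcoeff : stringCoeff q θ m = 0 := by
    have := apply_pow_succ_eq_stringCoeff_smul (sub_inv_ne_zero_of_zpow_injective hinj) hKE hK'E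
      hEF hKu hK'u hFu m
    rw [← hm, Nat.find_spec hex, map_zero, eq_comm, smul_eq_zero] at this
    exact this.resolve_right hEm
  have hq0 := ne_zero_of_zpow_injective hinj
  refine ⟨θ * (q ^ m)⁻¹, m, sq_eq_one_iff.mp (sq_eq_one_of_stringCoeff_eq_zero hinj hθ hcoeff), ?_⟩
  field_simp

end LowestWeight

theorem iSup_eigenspace_zpow_mul_eq_top {V : Type*} [AddCommGroup V] [Module ℂ V] {q θ : ℂ}
    (hq0 : q ≠ 0) {E0 E1p E1m K0 K1 : End ℂ V} (h : IsUqpRep q E0 E1p E1m K0 K1)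
    (hirr : IsIrred E0 E1p E1m K0 K1) (hθ : K0.HasEigenvalue θ) :
    ⨆ k : ℤ, K0.eigenspace (q ^ (2 * k) * θ) = ⊤ := by
  have hinv : ∀ {B : End ℂ V} (n : ℤ), K0 * B = q ^ (2 * n) • (B * K0) →
      ∀ v ∈ ⨆ k : ℤ, K0.eigenspace (q ^ (2 * k) * θ),
        B v ∈ ⨆ k : ℤ, K0.eigenspace (q ^ (2 * k) * θ) := fun n hB _ hv =>
    mem_iSup_eigenspace_of_mul_eq_smul hB
      (fun k => ⟨k + n, by rw [← mul_assoc, ← zpow_add₀ hq0]; ring_nf⟩) hv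
  refine (hirr _ (hinv 1 ?_) (hinv (-1) ?_) (hinv 1 ?_) (hinv 0 ?_) (hinv 0 ?_)).resolve_left ?_
  · simpa using h.K0E0
  · simpa using h.K0E1p
  · simpa using h.K0E1m
  · simp
  · simp [h.K0K1, h.K1K0]
  · intro hbot
    refine hasEigenvalue_iff.mp hθ (le_bot_iff.mp ?_)
    exact hbot ▸ le_iSup_of_le 0 (by simp)

/-- a finite-dimensional irreducible `U'_q(L(sl₂))`-module of dimension
at least `2` has `K₀` diagonalizable with eigenvalues `s₀ q^(2i-d)`, `0 ≤ i ≤ d`,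
for some positive integer `d` and `s₀ ∈ {1,-1}`, and `V` is the (direct) sum of the
corresponding eigenspaces. -/
theorem stmt4 (q : ℂ) (hq0 : q ≠ 0) (hq : ∀ n : ℕ, 0 < n → q ^ n ≠ 1)
    {V : Type*} [AddCommGroup V] [Module ℂ V] [FiniteDimensional ℂ V]
    (E0 E1p E1m K0 K1 : Module.End ℂ V) (h : IsUqpRep q E0 E1p E1m K0 K1)
    (hirr : IsIrred E0 E1p E1m K0 K1) (hdim : 2 ≤ Module.finrank ℂ V) :
    ∃ (d : ℕ) (s0 : ℂ), 0 < d ∧ (s0 = 1 ∨ s0 = -1) ∧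
      (∀ θ : ℂ, Module.End.HasEigenvalue K0 θ →
        ∃ i : ℕ, i ≤ d ∧ θ = s0 * q ^ (2 * (i : ℤ) - d)) ∧
      ⨆ i : Fin (d + 1), Module.End.eigenspace K0 (s0 * q ^ (2 * (i : ℤ) - d)) = ⊤ := by
  have hinj := zpow_injective_of_pow_ne_one hq0 hq
  have : Nontrivial V := (Module.finrank_pos_iff (R := ℂ)).mp (by omega)
  obtain ⟨μ, hμ⟩ := K0.exists_eigenvalue
  obtain ⟨θ, hθ, hθmax⟩ := exists_hasEigenvalue_not_hasEigenvalue_mul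
    (by simpa using pow_injective_of_zpow_injective hinj two_ne_zero)
    (hμ.ne_zero_of_mul_eq_one h.K1K0) hμ
  have hθ0 := hθ.ne_zero_of_mul_eq_one h.K1K0
  obtain ⟨u, hu⟩ := hθ.exists_hasEigenvector
  have hFu : E1m u = 0 := by
    rw [hasEigenvalue_iff, not_not] at hθmax
    exact (Submodule.mem_bot ℂ).mp
      (hθmax ▸ map_eigenspace_le_of_mul_eq_smul h.K0E1m θ (Submodule.mem_map_of_mem hu.1))
  obtain ⟨s0, m, hs0, hθs0⟩ := exists_sign_mul_pow_of_lowest_weight hinj h.K0E1p h.K1E1p h.e1comm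
    hθ0 hu.2 hu.apply_eq_smul (apply_eq_inv_smul_of_mul_eq_one h.K1K0 hθ0 hu.apply_eq_smul) hFu
  have htop := iSup_eigenspace_zpow_mul_eq_top hq0 h hirr hθ
  have hfin : {k : ℤ | K0.HasEigenvalue (q ^ (2 * k) * θ)}.Finite :=
    K0.finite_hasEigenvalue.preimage fun a _ b _ hab => by
      simpa using hinj (mul_right_cancel₀ hθ0 hab)
  obtain ⟨d, hd, hweights⟩ := hfin.exists_forall_add_two_mul_eq_two_mul_sub m
  have hform : ∀ k : ℤ, K0.HasEigenvalue (q ^ (2 * k) * θ) →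
      ∃ i : ℕ, i ≤ d ∧ q ^ (2 * k) * θ = s0 * q ^ (2 * (i : ℤ) - d) := fun k hk => by
    obtain ⟨i, hi, hki⟩ := hweights k hk
    exact ⟨i, hi, by rw [hθs0, ← hki, zpow_add₀ hq0, zpow_natCast]; ring⟩
  refine ⟨d, s0, hd, hs0, fun φ hφ => ?_,
    iSup_eigenspace_eq_top_of_forall_exists htop fun k hk => ?_⟩
  · obtain ⟨k, rfl⟩ := hφ.exists_eq_of_iSup_eigenspace_eq_top htop
    exact hform k hφ
  · obtain ⟨i, hi, hki⟩ := hform k hk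
    exact ⟨⟨i, by omega⟩, hki⟩
end
end

section
/- Let V be a finite-dimensional complex vector space and suppose (X⁺, X₁⁻, K) and (X⁺, X₂⁻, K) are both U_q(sl₂)-module structures on V with the same operators X⁺ and K. Then X₁⁻ = X₂⁻; that is, the action of X⁻ on a finite-dimensional U_q(sl₂)-module is uniquely determined by the actions of X⁺ and K. -/
open scoped TensorProduct

noncomputable section

/-- A `U_q(sl₂)`-module structure `(X⁺, X⁻, K)` (with `Kinv` the inverse of `K`). -/
structure IsUqSl2 (q : ℂ) {V : Type*} [AddCommGroup V] [Module ℂ V]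
    (Xp Xm K Kinv : Module.End ℂ V) : Prop where
  KKinv : K * Kinv = 1
  KinvK : Kinv * K = 1
  KXp : K * Xp = q ^ 2 • (Xp * K)
  KXm : K * Xm = (q ^ 2)⁻¹ • (Xm * K)
  comm : Xp * Xm - Xm * Xp = (q - q⁻¹)⁻¹ • (K - Kinv)

/-!
Put `D = X₁⁻ - X₂⁻`: it commutes with `X⁺` and `K D = q⁻² D K`. The adjoint action makes
`End V` a finite-dimensional `U_q(sl₂)`-module in which `D K` is annihilated by `X⁺` and has
`K`-weight `q⁻²`. But in a finite-dimensional module a highest weight vector `v` of weight `μ`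
has `μ² = q²ⁿ` for some `n ≥ 0`: the weights `q⁻²ʲ μ` of the `X⁻ʲ v` are distinct, so the string
stops, say `X⁻ⁿ⁺¹ v = 0 ≠ X⁻ⁿ v`, and `X⁺ X⁻ⁿ⁺¹ v` is an explicit multiple of `X⁻ⁿ v` vanishing
only when `μ² = q²ⁿ`. As `q⁻⁴ ≠ q²ⁿ`, `D K = 0`.
-/

theorem pow_injective_of_pow_ne_one {G₀ : Type*} [GroupWithZero G₀] {x : G₀} (hx0 : x ≠ 0)
    (hx : ∀ n : ℕ, 0 < n → x ^ n ≠ 1) : Function.Injective (x ^ · : ℕ → G₀) := by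
  intro a b (hab : x ^ a = x ^ b)
  wlog hlt : a < b generalizing a b
  · rcases (not_lt.1 hlt).lt_or_eq with h | h
    · exact (this hab.symm h).symm
    · exact h.symm
  refine absurd ?_ (hx (b - a) (by omega))
  rw [pow_sub₀ x hx0 hlt.le, ← hab, mul_inv_cancel₀ (pow_ne_zero a hx0)]

theorem sub_inv_ne_zero_of_pow_ne_one {𝕜 : Type*} [DivisionRing 𝕜] {x : 𝕜} (hx0 : x ≠ 0)
    (hx : ∀ n : ℕ, 0 < n → x ^ n ≠ 1) : x - x⁻¹ ≠ 0 := by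
  rw [sub_ne_zero]
  intro h
  exact hx 2 two_pos (by rw [sq]; nth_rw 2 [h]; exact mul_inv_cancel₀ hx0)

theorem sq_eq_inv_pow_of_sum_sub_inv_eq_zero {𝕜 : Type*} [Field 𝕜] {r μ : 𝕜} (hr0 : r ≠ 0)
    (hr : ∀ n : ℕ, 0 < n → r ^ n ≠ 1) (hμ : μ ≠ 0) {j : ℕ}
    (h : ∑ i ∈ Finset.range (j + 1), (r ^ i * μ - (r ^ i * μ)⁻¹) = 0) : μ ^ 2 = (r ^ j)⁻¹ := by
  have hfactor : ∑ i ∈ Finset.range (j + 1), (r ^ i * μ - (r ^ i * μ)⁻¹) =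
      (∑ i ∈ Finset.range (j + 1), r ^ i) * (μ - (r ^ j * μ)⁻¹) := by
    rw [Finset.sum_sub_distrib, mul_sub, Finset.sum_mul, Finset.sum_mul,
      ← Finset.sum_range_reflect (fun i => (r ^ i * μ)⁻¹)]
    congr 1
    refine Finset.sum_congr rfl fun i hi => ?_
    have hij : i ≤ j := Nat.lt_succ_iff.1 (Finset.mem_range.1 hi)
    rw [Nat.add_sub_cancel, pow_sub₀ r hr0 hij]
    field_simp
  have hgeom : ∑ i ∈ Finset.range (j + 1), r ^ i ≠ 0 := by
    intro h0
    have := geom_sum_mul r (j + 1)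
    rw [h0, zero_mul, eq_comm, sub_eq_zero] at this
    exact hr (j + 1) j.succ_pos this
  rw [hfactor, mul_eq_zero, or_iff_right hgeom, sub_eq_zero] at h
  rw [sq]
  nth_rw 2 [h]
  field_simp

theorem Module.End.exists_eq_zero_of_injective_eigenvalues {𝕜 W : Type*} [Field 𝕜]
    [AddCommGroup W] [Module 𝕜 W] [FiniteDimensional 𝕜 W] (f : Module.End 𝕜 W) {μ : ℕ → 𝕜}
    (hμ : Function.Injective μ) (w : ℕ → W) (hw : ∀ j, f (w j) = μ j • w j) :
    ∃ j, w j = 0 := by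
  by_contra! hne
  exact Module.Finite.not_linearIndependent_of_infinite w
    (f.eigenvectors_linearIndependent' μ hμ w fun j =>
      ⟨Module.End.mem_eigenspace_iff.2 (hw j), hne j⟩)

theorem Module.End.inv_mul_eq_of_mul_eq_smul {𝕜 V : Type*} [Field 𝕜] [AddCommGroup V]
    [Module 𝕜 V] {K Kinv X : Module.End 𝕜 V} (hKinvK : Kinv * K = 1) (hKKinv : K * Kinv = 1)
    {t : 𝕜} (ht : t ≠ 0) (h : K * X = t • (X * K)) :
    Kinv * X = t⁻¹ • (X * Kinv) := by
  have h1 : Kinv * (K * X) * Kinv = X * Kinv := by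
    rw [← mul_assoc, hKinvK, one_mul]
  rw [h, mul_smul_comm, smul_mul_assoc, mul_assoc, mul_assoc, hKKinv, mul_one] at h1
  rw [← h1, smul_smul, inv_mul_cancel₀ ht, one_smul]

namespace IsUqSl2

variable {q : ℂ} {V : Type*} [AddCommGroup V] [Module ℂ V] {Xp Xm K Kinv : Module.End ℂ V}

theorem K_Kinv_apply (h : IsUqSl2 q Xp Xm K Kinv) (x : V) : K (Kinv x) = x := by
  rw [← Module.End.mul_apply, h.KKinv, Module.End.one_apply]

theorem Kinv_K_apply (h : IsUqSl2 q Xp Xm K Kinv) (x : V) : Kinv (K x) = x := by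
  rw [← Module.End.mul_apply, h.KinvK, Module.End.one_apply]

theorem K_Xp_apply (h : IsUqSl2 q Xp Xm K Kinv) (x : V) : K (Xp x) = q ^ 2 • Xp (K x) :=
  LinearMap.congr_fun h.KXp x

theorem K_Xm_apply (h : IsUqSl2 q Xp Xm K Kinv) (x : V) : K (Xm x) = (q ^ 2)⁻¹ • Xm (K x) :=
  LinearMap.congr_fun h.KXm x

theorem Kinv_Xp_apply (h : IsUqSl2 q Xp Xm K Kinv) (hq0 : q ≠ 0) (x : V) :
    Kinv (Xp x) = (q ^ 2)⁻¹ • Xp (Kinv x) :=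
  LinearMap.congr_fun
    (Module.End.inv_mul_eq_of_mul_eq_smul h.KinvK h.KKinv (by simpa) h.KXp) x

theorem Kinv_Xm_apply (h : IsUqSl2 q Xp Xm K Kinv) (hq0 : q ≠ 0) (x : V) :
    Kinv (Xm x) = q ^ 2 • Xm (Kinv x) := by
  simpa using LinearMap.congr_fun
    (Module.End.inv_mul_eq_of_mul_eq_smul h.KinvK h.KKinv (by simpa) h.KXm) x

theorem Xp_Xm_apply (h : IsUqSl2 q Xp Xm K Kinv) (x : V) :
    Xp (Xm x) = Xm (Xp x) + (q - q⁻¹)⁻¹ • (K x - Kinv x) := by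
  have := LinearMap.congr_fun h.comm x
  rw [LinearMap.sub_apply, LinearMap.smul_apply, LinearMap.sub_apply, sub_eq_iff_eq_add'] at this
  exact this

variable {v : V} {μ : ℂ}

theorem Kinv_apply_eq_inv_smul (h : IsUqSl2 q Xp Xm K Kinv) (hv : K v = μ • v) :
    Kinv v = μ⁻¹ • v := by
  rcases eq_or_ne μ 0 with rfl | hμ
  · have hv0 : v = 0 := by rw [← h.Kinv_K_apply v, hv, zero_smul, map_zero]
    rw [hv0, map_zero, smul_zero]
  · rw [← inv_smul_smul₀ hμ (Kinv v), ← map_smul, ← hv, h.Kinv_K_apply]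

theorem K_Xm_pow_apply (h : IsUqSl2 q Xp Xm K Kinv) (hv : K v = μ • v) (j : ℕ) :
    K ((Xm ^ j) v) = ((q ^ 2)⁻¹ ^ j * μ) • (Xm ^ j) v := by
  induction j with
  | zero => simpa using hv
  | succ j ih =>
    rw [pow_succ', Module.End.mul_apply, h.K_Xm_apply, ih, map_smul, smul_smul,
      pow_succ' _ j, mul_assoc]

theorem Xp_Xm_pow_succ_apply (h : IsUqSl2 q Xp Xm K Kinv) (hXpv : Xp v = 0) (hv : K v = μ • v)
    (j : ℕ) : Xp ((Xm ^ (j + 1)) v) = ((q - q⁻¹)⁻¹ * ∑ i ∈ Finset.range (j + 1),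
      ((q ^ 2)⁻¹ ^ i * μ - ((q ^ 2)⁻¹ ^ i * μ)⁻¹)) • (Xm ^ j) v := by
  induction j with
  | zero =>
    rw [zero_add, pow_one, pow_zero, Module.End.one_apply, h.Xp_Xm_apply, hXpv, map_zero,
      zero_add, hv, h.Kinv_apply_eq_inv_smul hv, ← sub_smul, smul_smul]
    simp
  | succ j ih =>
    have hw := h.K_Xm_pow_apply hv (j + 1)
    have hfold : Xm ((Xm ^ j) v) = (Xm ^ (j + 1)) v := by rw [pow_succ', Module.End.mul_apply]
    rw [pow_succ' Xm (j + 1), Module.End.mul_apply, h.Xp_Xm_apply, ih, map_smul, hfold, hw,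
      h.Kinv_apply_eq_inv_smul hw, ← sub_smul, smul_smul, ← add_smul,
      Finset.sum_range_succ _ (j + 1), mul_add]

theorem exists_sq_eq_pow_of_highestWeight [FiniteDimensional ℂ V] (h : IsUqSl2 q Xp Xm K Kinv)
    (hq0 : q ≠ 0) (hq : ∀ n : ℕ, 0 < n → q ^ n ≠ 1) (hv0 : v ≠ 0) (hXpv : Xp v = 0)
    (hv : K v = μ • v) : ∃ n : ℕ, μ ^ 2 = q ^ (2 * n) := by
  set r := (q ^ 2)⁻¹ with hr
  have hr0 : r ≠ 0 := by positivity
  have hr1 : ∀ n : ℕ, 0 < n → r ^ n ≠ 1 := by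
    intro n hn h1
    refine hq (2 * n) (by omega) ?_
    rwa [hr, inv_pow, inv_eq_one, ← pow_mul] at h1
  have hμ : μ ≠ 0 := by
    rintro rfl
    exact hv0 (by rw [← h.Kinv_K_apply v, hv, zero_smul, map_zero])
  classical
  have hex : ∃ k, (Xm ^ k) v = 0 :=
    K.exists_eq_zero_of_injective_eigenvalues
      ((mul_left_injective₀ hμ).comp (pow_injective_of_pow_ne_one hr0 hr1)) _ (h.K_Xm_pow_apply hv)
  obtain ⟨n, hn⟩ : ∃ n, Nat.find hex = n + 1 :=
    Nat.exists_eq_add_one_of_ne_zero fun h0 => hv0 (by simpa [h0] using Nat.find_spec hex)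
  have hXmn : (Xm ^ n) v ≠ 0 := Nat.find_min hex (by omega)
  have hXmn1 : (Xm ^ (n + 1)) v = 0 := hn ▸ Nat.find_spec hex
  have hsum := h.Xp_Xm_pow_succ_apply hXpv hv n
  rw [hXmn1, map_zero, eq_comm, smul_eq_zero, or_iff_left hXmn, mul_eq_zero,
    or_iff_right (inv_ne_zero (sub_inv_ne_zero_of_pow_ne_one hq0 hq))] at hsum
  refine ⟨n, ?_⟩
  rw [sq_eq_inv_pow_of_sum_sub_inv_eq_zero hr0 hr1 hμ hsum, hr, inv_pow, inv_inv, pow_mul]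

end IsUqSl2

section Adjoint

variable {V : Type*} [AddCommGroup V] [Module ℂ V]

/-- `A ↦ ∑ x₍₁₎ A S(x₍₂₎)` for the coproduct `Δ X⁺ = X⁺ ⊗ 1 + K ⊗ X⁺`,
`Δ X⁻ = X⁻ ⊗ K⁻¹ + 1 ⊗ X⁻`, `Δ K = K ⊗ K`. -/
def adjointXp (Xp K Kinv : Module.End ℂ V) : Module.End ℂ (Module.End ℂ V) :=
  LinearMap.mulLeft ℂ Xp - LinearMap.mulLeft ℂ K * LinearMap.mulRight ℂ (Kinv * Xp)

def adjointXm (Xm K : Module.End ℂ V) : Module.End ℂ (Module.End ℂ V) :=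
  LinearMap.mulRight ℂ K * (LinearMap.mulLeft ℂ Xm - LinearMap.mulRight ℂ Xm)

def adjointK (K Kinv : Module.End ℂ V) : Module.End ℂ (Module.End ℂ V) :=
  LinearMap.mulLeft ℂ K * LinearMap.mulRight ℂ Kinv

@[simp]
theorem adjointXp_apply_apply (Xp K Kinv A : Module.End ℂ V) (x : V) :
    adjointXp Xp K Kinv A x = Xp (A x) - K (A (Kinv (Xp x))) := rfl

@[simp]
theorem adjointXm_apply_apply (Xm K A : Module.End ℂ V) (x : V) :
    adjointXm Xm K A x = Xm (A (K x)) - A (Xm (K x)) := rfl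

@[simp]
theorem adjointK_apply_apply (K Kinv A : Module.End ℂ V) (x : V) :
    adjointK K Kinv A x = K (A (Kinv x)) := rfl

theorem IsUqSl2.adjoint {q : ℂ} (hq0 : q ≠ 0) {Xp Xm K Kinv : Module.End ℂ V}
    (h : IsUqSl2 q Xp Xm K Kinv) :
    IsUqSl2 q (adjointXp Xp K Kinv) (adjointXm Xm K) (adjointK K Kinv) (adjointK Kinv K) := by
  constructor <;> ext A x <;>
    simp only [LinearMap.sub_apply, LinearMap.smul_apply, Module.End.mul_apply,
      Module.End.one_apply, adjointXp_apply_apply, adjointXm_apply_apply, adjointK_apply_apply,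
      map_sub, map_add, map_smul, smul_smul, h.K_Kinv_apply, h.Kinv_K_apply, h.K_Xp_apply,
      h.K_Xm_apply, h.Kinv_Xp_apply hq0, h.Kinv_Xm_apply hq0, h.Xp_Xm_apply] <;>
    match_scalars <;> field_simp <;> ring

end Adjoint

theorem IsUqSl2.eq_zero_of_commute_of_K_mul_eq {q : ℂ} {V : Type*} [AddCommGroup V]
    [Module ℂ V] [FiniteDimensional ℂ V] {Xp Xm K Kinv D : Module.End ℂ V}
    (h : IsUqSl2 q Xp Xm K Kinv) (hq0 : q ≠ 0) (hq : ∀ n : ℕ, 0 < n → q ^ n ≠ 1)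
    (hXpD : Commute Xp D) (hKD : K * D = (q ^ 2)⁻¹ • (D * K)) : D = 0 := by
  have hKD_apply (x : V) : K (D x) = (q ^ 2)⁻¹ • D (K x) := LinearMap.congr_fun hKD x
  have hXp : adjointXp Xp K Kinv (D * K) = 0 := by
    ext x
    rw [adjointXp_apply_apply, Module.End.mul_apply, Module.End.mul_apply, h.K_Kinv_apply,
      hKD_apply, h.K_Xp_apply, map_smul, ← Module.End.mul_apply D Xp, ← hXpD.eq,
      Module.End.mul_apply, smul_smul, inv_mul_cancel₀ (pow_ne_zero 2 hq0), one_smul, sub_self,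
      LinearMap.zero_apply]
  have hK : adjointK K Kinv (D * K) = (q ^ 2)⁻¹ • (D * K) := by
    ext x
    rw [adjointK_apply_apply, Module.End.mul_apply, h.K_Kinv_apply, hKD_apply,
      LinearMap.smul_apply, Module.End.mul_apply]
  by_contra hD
  have hDK : D * K ≠ 0 := fun h0 => hD (by rw [← mul_one D, ← h.KKinv, ← mul_assoc, h0, zero_mul])
  obtain ⟨n, hn⟩ := (h.adjoint hq0).exists_sq_eq_pow_of_highestWeight hq0 hq hDK hXp hK
  refine hq (2 * n + 4) (by omega) ?_
  rw [pow_add, ← hn]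
  field_simp

/-- on a finite-dimensional `U_q(sl₂)`-module, the action of `X⁻` is
uniquely determined by those of `X⁺` and `K`. -/
theorem stmt6 (q : ℂ) (hq0 : q ≠ 0) (hq : ∀ n : ℕ, 0 < n → q ^ n ≠ 1)
    {V : Type*} [AddCommGroup V] [Module ℂ V] [FiniteDimensional ℂ V]
    (Xp X1m X2m K Kinv : Module.End ℂ V)
    (h1 : IsUqSl2 q Xp X1m K Kinv) (h2 : IsUqSl2 q Xp X2m K Kinv) :
    X1m = X2m := by
  refine sub_eq_zero.1 (h1.eq_zero_of_commute_of_K_mul_eq hq0 hq ?_ ?_)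
  · rw [Commute, SemiconjBy, mul_sub, sub_mul, sub_eq_sub_iff_sub_eq_sub]
    exact h1.comm.trans h2.comm.symm
  · rw [mul_sub, h1.KXm, h2.KXm, sub_mul, smul_sub]

end
end

section
/- Let V₁ and V₂ be finite-dimensional irreducible U'_q(L(sl₂))-modules, with operators (E₀⁺,E₁⁺,E₁⁻,K₀,K₁) on V₁ and (F₀⁺,F₁⁺,F₁⁻,L₀,L₁) on V₂, and let s ∈ ℂ∖{0}. If there is a linear bijection σ : V₁ → V₂ with σK₀ = L₀σ, σE₁⁺ = F₁⁺σ, and σ(E₀⁺ + s^{−2}E₁⁻K₁) = (F₀⁺ + s^{−2}F₁⁻L₁)σ, then also σE₀⁺ = F₀⁺σ and σE₁⁻ = F₁⁻σ; that is, V₁ and V₂ are isomorphic as U'_q(L(sl₂))-modules. -/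
open scoped TensorProduct

noncomputable section

section AuxStmt7

variable {V : Type*} [AddCommGroup V] [Module ℂ V]

private lemma smulComm_apply (A B : Module.End ℂ V) (t : ℂ)
    (h : A * B = t • (B * A)) (w : V) : A (B w) = t • B (A w) := by
  have := LinearMap.congr_fun h w
  simpa using this

private lemma powComm1 (A B : Module.End ℂ V) (t : ℂ) (h : B * A = t • (A * B)) (n : ℕ) :
    B * A ^ n = t ^ n • (A ^ n * B) := by
  induction n with
  | zero => simp
  | succ n ih =>
    have h1 : B * A ^ (n + 1) = (B * A ^ n) * A := by rw [pow_succ, mul_assoc]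
    rw [h1, ih, smul_mul_assoc, mul_assoc, h, mul_smul_comm, smul_smul, ← pow_succ t n]
    rw [pow_succ A n, mul_assoc]

private lemma powComm2 (A B : Module.End ℂ V) (t : ℂ) (h : A * B = t • (B * A)) (n : ℕ) :
    A ^ n * B = t ^ n • (B * A ^ n) := by
  induction n with
  | zero => simp
  | succ n ih =>
    have h1 : A ^ (n + 1) * B = A * (A ^ n * B) := by rw [pow_succ' A n, mul_assoc]
    rw [h1, ih, mul_smul_comm, ← mul_assoc, h, smul_mul_assoc, smul_smul, ← pow_succ t n]
    rw [pow_succ' A n, mul_assoc]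

private lemma key [FiniteDimensional ℂ V]
    (q : ℂ) (hq0 : q ≠ 0) (hq : ∀ n : ℕ, 0 < n → q ^ n ≠ 1)
    (E0 E1p E1m K0 K1 E0' E1m' : Module.End ℂ V) (a : ℂ)
    (hK0K1 : K0 * K1 = 1)
    (hK1E1m : K1 * E1m = (q ^ 2)⁻¹ • (E1m * K1))
    (hK0E1m : K0 * E1m = q ^ 2 • (E1m * K0))
    (he1comm : E1p * E1m - E1m * E1p = (q - q⁻¹)⁻¹ • (K1 - K0))
    (he0e1m : E0 * E1m = E1m * E0)
    (hK1E1m' : K1 * E1m' = (q ^ 2)⁻¹ • (E1m' * K1))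
    (hK0E1m' : K0 * E1m' = q ^ 2 • (E1m' * K0))
    (he1comm' : E1p * E1m' - E1m' * E1p = (q - q⁻¹)⁻¹ • (K1 - K0))
    (he0e1m' : E0' * E1m' = E1m' * E0')
    (hE0' : E0' = E0 - a • ((E1m' - E1m) * K1))
    (hirr : IsIrred E0 E1p E1m K0 K1) :
    E1m' = E1m := by
  have hq2 : (q : ℂ) ^ 2 ≠ 0 := pow_ne_zero 2 hq0
  set X : Module.End ℂ V := E1m' - E1m with hXdef
  -- derived commutation relations for X
  have hK1X : K1 * X = (q ^ 2)⁻¹ • (X * K1) := by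
    rw [hXdef, mul_sub, hK1E1m, hK1E1m', sub_mul, smul_sub]
  have hK0X : K0 * X = q ^ 2 • (X * K0) := by
    rw [hXdef, mul_sub, hK0E1m, hK0E1m', sub_mul, smul_sub]
  have hE1pX : E1p * X = X * E1p := by
    have h0 : E1p * X - X * E1p =
        (E1p * E1m' - E1m' * E1p) - (E1p * E1m - E1m * E1p) := by
      rw [hXdef]; noncomm_ring
    rw [he1comm', he1comm, sub_self] at h0
    exact sub_eq_zero.mp h0
  have hE1mK1 : E1m * K1 = q ^ 2 • (K1 * E1m) := by
    rw [hK1E1m, smul_smul, mul_inv_cancel₀ hq2, one_smul]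
  have hE1mK0 : E1m * K0 = (q ^ 2)⁻¹ • (K0 * E1m) := by
    rw [hK0E1m, smul_smul, inv_mul_cancel₀ hq2, one_smul]
  have hXK1 : X * K1 = q ^ 2 • (K1 * X) := by
    rw [hK1X, smul_smul, mul_inv_cancel₀ hq2, one_smul]
  have hXK0 : X * K0 = (q ^ 2)⁻¹ • (K0 * X) := by
    rw [hK0X, smul_smul, inv_mul_cancel₀ hq2, one_smul]
  have pE0n : ∀ n : ℕ, E1m ^ n * E0 = E0 * E1m ^ n := by
    intro n
    induction n with
    | zero => simp
    | succ n ih =>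
      rw [pow_succ, mul_assoc, ← he0e1m, ← mul_assoc, ih, mul_assoc]
  -- the invariant subspace U
  set U : Submodule ℂ V := ⨅ n : ℕ, LinearMap.ker (X ∘ₗ E1m ^ n) with hUdef
  have hmem : ∀ v : V, v ∈ U ↔ ∀ n : ℕ, X ((E1m ^ n) v) = 0 := by
    intro v
    rw [hUdef]
    simp [Submodule.mem_iInf, LinearMap.mem_ker]

  have hUK1 : ∀ v, v ∈ U → K1 v ∈ U := by
    intro v hv
    have hv' := (hmem v).mp hv
    rw [hmem]; intro n
    rw [smulComm_apply (E1m ^ n) K1 _ (powComm2 E1m K1 _ hE1mK1 n) v, map_smul,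
      smulComm_apply X K1 _ hXK1 ((E1m ^ n) v), hv' n, map_zero, smul_zero, smul_zero]
  have hUK0 : ∀ v, v ∈ U → K0 v ∈ U := by
    intro v hv
    have hv' := (hmem v).mp hv
    rw [hmem]; intro n
    rw [smulComm_apply (E1m ^ n) K0 _ (powComm2 E1m K0 _ hE1mK0 n) v, map_smul,
      smulComm_apply X K0 _ hXK0 ((E1m ^ n) v), hv' n, map_zero, smul_zero, smul_zero]
  have hUE1m : ∀ v, v ∈ U → E1m v ∈ U := by
    intro v hv
    have hv' := (hmem v).mp hv
    rw [hmem]; intro n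
    have h : (E1m ^ n) (E1m v) = (E1m ^ (n + 1)) v := by
      rw [pow_succ E1m n, Module.End.mul_apply]
    rw [h]; exact hv' (n + 1)
  have hUE1p : ∀ v, v ∈ U → E1p v ∈ U := by
    have main : ∀ n : ℕ, ∀ v, v ∈ U → X ((E1m ^ n) (E1p v)) = 0 := by
      intro n
      induction n with
      | zero =>
        intro v hv
        have hv0 : X v = 0 := by simpa using (hmem v).mp hv 0
        have e := LinearMap.congr_fun hE1pX v
        simp only [Module.End.mul_apply] at e
        simp only [pow_zero, Module.End.one_apply]
        rw [← e, hv0, map_zero]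
      | succ n ih =>
        intro v hv
        have hstep : (E1m ^ (n + 1)) (E1p v) = (E1m ^ n) (E1m (E1p v)) := by
          rw [pow_succ E1m n, Module.End.mul_apply]
        have hrel : E1m * E1p = E1p * E1m - (q - q⁻¹)⁻¹ • (K1 - K0) := by
          rw [← he1comm]; abel
        have e : E1m (E1p v) = E1p (E1m v) - (q - q⁻¹)⁻¹ • (K1 v - K0 v) := by
          have := LinearMap.congr_fun hrel v
          simpa using this
        rw [hstep, e, map_sub, map_smul, map_sub, map_sub, map_smul, map_sub]
        rw [ih (E1m v) (hUE1m v hv), (hmem (K1 v)).mp (hUK1 v hv) n,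
          (hmem (K0 v)).mp (hUK0 v hv) n]
        simp
    intro v hv
    rw [hmem]; intro n
    exact main n v hv
  have hUE0 : ∀ v, v ∈ U → E0 v ∈ U := by
    intro v hv
    have hv' := (hmem v).mp hv
    rw [hmem]; intro n
    have hcom : (E1m ^ n) (E0 v) = E0 ((E1m ^ n) v) := by
      have := LinearMap.congr_fun (pE0n n) v
      simpa using this
    rw [hcom]
    have hXu : X ((E1m ^ n) v) = 0 := hv' n
    have hK1vU := (hmem (K1 v)).mp (hUK1 v hv)
    have hXK1u : X (K1 ((E1m ^ n) v)) = 0 := by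
      rw [smulComm_apply K1 (E1m ^ n) _ (powComm1 E1m K1 _ hK1E1m n) v, map_smul,
        hK1vU n, smul_zero]
    have hXEK1u : X (E1m (K1 ((E1m ^ n) v))) = 0 := by
      rw [smulComm_apply K1 (E1m ^ n) _ (powComm1 E1m K1 _ hK1E1m n) v, map_smul, map_smul]
      have h : E1m ((E1m ^ n) (K1 v)) = (E1m ^ (n + 1)) (K1 v) := by
        rw [pow_succ' E1m n, Module.End.mul_apply]
      rw [h, hK1vU (n + 1), smul_zero]
    have hstep := LinearMap.congr_fun he0e1m' ((E1m ^ n) v)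
    simp only [Module.End.mul_apply] at hstep
    have hE1m'eq : E1m' = E1m + X := by rw [hXdef]; abel
    have hE0'u : E0' ((E1m ^ n) v) = E0 ((E1m ^ n) v) := by
      rw [hE0']
      simp only [LinearMap.sub_apply, LinearMap.smul_apply, Module.End.mul_apply]
      rw [hXK1u, smul_zero, sub_zero]
    have hE1m'u : E1m' ((E1m ^ n) v) = E1m ((E1m ^ n) v) := by
      rw [hE1m'eq]
      simp only [LinearMap.add_apply]
      rw [hXu, add_zero]
    rw [hE1m'u, hE0'u] at hstep
    have hL : E0' (E1m ((E1m ^ n) v)) = E1m (E0 ((E1m ^ n) v)) := by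
      rw [hE0']
      simp only [LinearMap.sub_apply, LinearMap.smul_apply, Module.End.mul_apply]
      rw [smulComm_apply K1 E1m _ hK1E1m ((E1m ^ n) v), map_smul, hXEK1u, smul_zero,
        smul_zero, sub_zero]
      have := LinearMap.congr_fun he0e1m ((E1m ^ n) v)
      simpa using this
    rw [hL, hE1m'eq] at hstep
    simp only [LinearMap.add_apply] at hstep
    exact left_eq_add.mp hstep
  -- conclude: U is a nonzero invariant subspace, hence everything, hence X = 0
  rcases subsingleton_or_nontrivial V with hV | hV
  · ext v; exact Subsingleton.elim _ _
  · obtain ⟨θ₀, hθ₀⟩ := Module.End.exists_eigenvalue K1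
    have hθ₀0 : θ₀ ≠ 0 := by
      rintro rfl
      obtain ⟨v, hv⟩ := hθ₀.exists_hasEigenvector
      have h1 : K1 v = 0 := by rw [hv.apply_eq_smul, zero_smul]
      have h2 : K0 (K1 v) = v := by
        have := LinearMap.congr_fun hK0K1 v
        simpa using this
      rw [h1, map_zero] at h2
      exact hv.right h2.symm
    have hγ0 : ((q ^ 2)⁻¹ : ℂ) ≠ 0 := inv_ne_zero hq2
    have hγinj : ∀ m : ℕ, 0 < m → ((q ^ 2)⁻¹ : ℂ) ^ m ≠ 1 := by
      intro m hm h
      apply hq (2 * m) (by omega)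
      rw [inv_pow] at h
      have h2 : ((q ^ 2) ^ m : ℂ) = 1 := by rwa [inv_eq_one] at h
      rwa [← pow_mul] at h2
    have haux : ∀ n m : ℕ, n < m → ((q ^ 2)⁻¹ : ℂ) ^ n = (q ^ 2)⁻¹ ^ m → False := by
      intro n m hlt h
      have h3 : ((q ^ 2)⁻¹ : ℂ) ^ n * 1 = (q ^ 2)⁻¹ ^ n * (q ^ 2)⁻¹ ^ (m - n) := by
        rw [mul_one, ← pow_add]
        have hnm : n + (m - n) = m := by omega
        rw [hnm]; exact h
      have h4 := mul_left_cancel₀ (pow_ne_zero n hγ0) h3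
      exact hγinj (m - n) (by omega) h4.symm
    have hinj : Function.Injective (fun n : ℕ => ((q ^ 2)⁻¹ : ℂ) ^ n * θ₀) := by
      intro n m h
      simp only at h
      have h2 := mul_right_cancel₀ hθ₀0 h
      rcases lt_trichotomy n m with hlt | heq | hgt
      · exact (haux n m hlt h2).elim
      · exact heq
      · exact (haux m n hgt h2.symm).elim
    have hfin : {n : ℕ | Module.End.HasEigenvalue K1 ((q ^ 2)⁻¹ ^ n * θ₀)}.Finite := by
      have hpre : {n : ℕ | Module.End.HasEigenvalue K1 ((q ^ 2)⁻¹ ^ n * θ₀)} =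
          (fun n : ℕ => ((q ^ 2)⁻¹ : ℂ) ^ n * θ₀) ⁻¹' (Module.End.HasEigenvalue K1) := rfl
      rw [hpre]
      exact Set.Finite.preimage hinj.injOn (Module.End.finite_hasEigenvalue K1)
    have hFne : hfin.toFinset.Nonempty := by
      rw [Set.Finite.toFinset_nonempty]
      exact ⟨0, by simpa using hθ₀⟩
    set N := hfin.toFinset.max' hFne with hNdef
    have hNS : Module.End.HasEigenvalue K1 ((q ^ 2)⁻¹ ^ N * θ₀) := by
      have := Finset.max'_mem hfin.toFinset hFne
      rw [Set.Finite.mem_toFinset] at this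
      exact this
    have hNmax : ∀ n : ℕ, Module.End.HasEigenvalue K1 ((q ^ 2)⁻¹ ^ n * θ₀) → n ≤ N :=
      fun n hn => Finset.le_max' _ n ((Set.Finite.mem_toFinset hfin).mpr hn)
    obtain ⟨v, hv⟩ := hNS.exists_hasEigenvector
    have hvK : K1 v = ((q ^ 2)⁻¹ ^ N * θ₀) • v := hv.apply_eq_smul
    have hvU : v ∈ U := by
      rw [hmem]; intro n
      by_contra hw
      have hKw : K1 (X ((E1m ^ n) v)) =
          ((q ^ 2)⁻¹ ^ (N + n + 1) * θ₀) • X ((E1m ^ n) v) := by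
        rw [smulComm_apply K1 X _ hK1X ((E1m ^ n) v),
          smulComm_apply K1 (E1m ^ n) _ (powComm1 E1m K1 _ hK1E1m n) v, hvK]
        simp only [map_smul, smul_smul]
        congr 1
        ring
      have hEig : Module.End.HasEigenvalue K1 ((q ^ 2)⁻¹ ^ (N + n + 1) * θ₀) :=
        Module.End.hasEigenvalue_of_hasEigenvector
          ⟨Module.End.mem_eigenspace_iff.mpr hKw, hw⟩
      have := hNmax _ hEig
      omega
    rcases hirr U hUE0 hUE1p hUE1m hUK0 hUK1 with hbot | htop
    · exfalso
      rw [hbot, Submodule.mem_bot] at hvU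
      exact hv.right hvU
    · have hX0 : X = 0 := by
        ext w
        have hw : w ∈ U := by rw [htop]; trivial
        have := (hmem w).mp hw 0
        simpa using this
      have h5 : E1m' - E1m = 0 := by rw [← hXdef]; exact hX0
      exact sub_eq_zero.mp h5
end AuxStmt7

section ConjAux

variable {V1 V2 : Type*} [AddCommGroup V1] [Module ℂ V1] [AddCommGroup V2] [Module ℂ V2]

private def conjEnd (σ : V1 ≃ₗ[ℂ] V2) (G : Module.End ℂ V2) : Module.End ℂ V1 :=
  σ.symm.toLinearMap ∘ₗ G ∘ₗ σ.toLinearMap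

private lemma conjEnd_apply (σ : V1 ≃ₗ[ℂ] V2) (G : Module.End ℂ V2) (v : V1) :
    conjEnd σ G v = σ.symm (G (σ v)) := rfl

private lemma conjEnd_mul (σ : V1 ≃ₗ[ℂ] V2) (G H : Module.End ℂ V2) :
    conjEnd σ (G * H) = conjEnd σ G * conjEnd σ H := by
  ext v
  simp [conjEnd_apply, Module.End.mul_apply, LinearEquiv.apply_symm_apply]

private lemma conjEnd_add (σ : V1 ≃ₗ[ℂ] V2) (G H : Module.End ℂ V2) :
    conjEnd σ (G + H) = conjEnd σ G + conjEnd σ H := by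
  ext v; simp [conjEnd_apply]

private lemma conjEnd_sub (σ : V1 ≃ₗ[ℂ] V2) (G H : Module.End ℂ V2) :
    conjEnd σ (G - H) = conjEnd σ G - conjEnd σ H := by
  ext v; simp [conjEnd_apply]

private lemma conjEnd_smul (σ : V1 ≃ₗ[ℂ] V2) (t : ℂ) (G : Module.End ℂ V2) :
    conjEnd σ (t • G) = t • conjEnd σ G := by
  ext v; simp [conjEnd_apply]

private lemma conjEnd_one (σ : V1 ≃ₗ[ℂ] V2) : conjEnd σ (1 : Module.End ℂ V2) = 1 := by
  ext v; simp [conjEnd_apply]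

end ConjAux


/-- a linear bijection between finite-dimensional irreducible
`U'_q(L(sl₂))`-modules intertwining `K₀`, `E₁⁺` and `E₀⁺ + s⁻² E₁⁻K₁` intertwines
`E₀⁺` and `E₁⁻` as well, hence is an isomorphism of `U'_q(L(sl₂))`-modules. -/
theorem stmt7 (q : ℂ) (hq0 : q ≠ 0) (hq : ∀ n : ℕ, 0 < n → q ^ n ≠ 1)
    {V1 V2 : Type*} [AddCommGroup V1] [Module ℂ V1] [AddCommGroup V2] [Module ℂ V2]
    [FiniteDimensional ℂ V1] [FiniteDimensional ℂ V2]
    (E0 E1p E1m K0 K1 : Module.End ℂ V1) (F0 F1p F1m L0 L1 : Module.End ℂ V2)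
    (h1 : IsUqpRep q E0 E1p E1m K0 K1) (h2 : IsUqpRep q F0 F1p F1m L0 L1)
    (hirr1 : IsIrred E0 E1p E1m K0 K1) (hirr2 : IsIrred F0 F1p F1m L0 L1)
    (s : ℂ) (hs : s ≠ 0) (σ : V1 ≃ₗ[ℂ] V2)
    (hK0 : σ.toLinearMap ∘ₗ K0 = L0 ∘ₗ σ.toLinearMap)
    (hE1p : σ.toLinearMap ∘ₗ E1p = F1p ∘ₗ σ.toLinearMap)
    (hmix : σ.toLinearMap ∘ₗ (E0 + (s ^ 2)⁻¹ • (E1m * K1)) =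
      (F0 + (s ^ 2)⁻¹ • (F1m * L1)) ∘ₗ σ.toLinearMap) :
    σ.toLinearMap ∘ₗ E0 = F0 ∘ₗ σ.toLinearMap ∧
      σ.toLinearMap ∘ₗ E1m = F1m ∘ₗ σ.toLinearMap := by
  have hK0c : conjEnd σ L0 = K0 := by
    ext v
    have h := LinearMap.congr_fun hK0 v
    simp only [LinearMap.comp_apply, LinearEquiv.coe_coe] at h
    rw [conjEnd_apply, ← h, LinearEquiv.symm_apply_apply]
  have hE1pc : conjEnd σ F1p = E1p := by
    ext v
    have h := LinearMap.congr_fun hE1p v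
    simp only [LinearMap.comp_apply, LinearEquiv.coe_coe] at h
    rw [conjEnd_apply, ← h, LinearEquiv.symm_apply_apply]
  have hLK : conjEnd σ L1 * conjEnd σ L0 = 1 := by
    rw [← conjEnd_mul, h2.K1K0, conjEnd_one]
  have hK1c : conjEnd σ L1 = K1 := by
    calc conjEnd σ L1 = conjEnd σ L1 * (K0 * K1) := by rw [h1.K0K1, mul_one]
      _ = (conjEnd σ L1 * conjEnd σ L0) * K1 := by rw [hK0c, mul_assoc]
      _ = K1 := by rw [hLK, one_mul]
  have hmixc : conjEnd σ (F0 + (s ^ 2)⁻¹ • (F1m * L1)) = E0 + (s ^ 2)⁻¹ • (E1m * K1) := by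
    ext v
    have h := LinearMap.congr_fun hmix v
    simp only [LinearMap.comp_apply, LinearEquiv.coe_coe] at h
    rw [conjEnd_apply, ← h, LinearEquiv.symm_apply_apply]
  have hsum : E0 + (s ^ 2)⁻¹ • (E1m * K1) =
      conjEnd σ F0 + (s ^ 2)⁻¹ • (conjEnd σ F1m * K1) := by
    calc E0 + (s ^ 2)⁻¹ • (E1m * K1) = conjEnd σ (F0 + (s ^ 2)⁻¹ • (F1m * L1)) := hmixc.symm
      _ = conjEnd σ F0 + (s ^ 2)⁻¹ • (conjEnd σ F1m * conjEnd σ L1) := by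
          rw [conjEnd_add, conjEnd_smul, conjEnd_mul]
      _ = conjEnd σ F0 + (s ^ 2)⁻¹ • (conjEnd σ F1m * K1) := by rw [hK1c]
  have hE0'def : conjEnd σ F0 = E0 - (s ^ 2)⁻¹ • ((conjEnd σ F1m - E1m) * K1) := by
    have h2' : conjEnd σ F0 = E0 + (s ^ 2)⁻¹ • (E1m * K1) -
        (s ^ 2)⁻¹ • (conjEnd σ F1m * K1) := by
      rw [hsum]; abel
    rw [sub_mul, smul_sub, h2']
    abel
  have tK1E1m' : K1 * conjEnd σ F1m = (q ^ 2)⁻¹ • (conjEnd σ F1m * K1) := by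
    rw [← hK1c, ← conjEnd_mul, ← conjEnd_mul, ← conjEnd_smul]
    exact congrArg (conjEnd σ) h2.K1E1m
  have tK0E1m' : K0 * conjEnd σ F1m = q ^ 2 • (conjEnd σ F1m * K0) := by
    rw [← hK0c, ← conjEnd_mul, ← conjEnd_mul, ← conjEnd_smul]
    exact congrArg (conjEnd σ) h2.K0E1m
  have te1comm' : E1p * conjEnd σ F1m - conjEnd σ F1m * E1p = (q - q⁻¹)⁻¹ • (K1 - K0) := by
    rw [← hE1pc, ← hK1c, ← hK0c, ← conjEnd_mul, ← conjEnd_mul, ← conjEnd_sub, ← conjEnd_sub,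
      ← conjEnd_smul]
    exact congrArg (conjEnd σ) h2.e1comm
  have te0e1m' : conjEnd σ F0 * conjEnd σ F1m = conjEnd σ F1m * conjEnd σ F0 := by
    rw [← conjEnd_mul, ← conjEnd_mul]
    exact congrArg (conjEnd σ) h2.e0e1m
  have hkey : conjEnd σ F1m = E1m :=
    key q hq0 hq E0 E1p E1m K0 K1 (conjEnd σ F0) (conjEnd σ F1m) ((s ^ 2)⁻¹)
      h1.K0K1 h1.K1E1m h1.K0E1m h1.e1comm h1.e0e1m
      tK1E1m' tK0E1m' te1comm' te0e1m' hE0'def hirr1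
  have hF0c : conjEnd σ F0 = E0 := by
    rw [hE0'def, hkey]
    simp
  constructor
  · ext v
    have h := LinearMap.congr_fun hF0c v
    rw [conjEnd_apply] at h
    simp only [LinearMap.comp_apply, LinearEquiv.coe_coe]
    rw [← h, LinearEquiv.apply_symm_apply]
  · ext v
    have h := LinearMap.congr_fun hkey v
    rw [conjEnd_apply] at h
    simp only [LinearMap.comp_apply, LinearEquiv.coe_coe]
    rw [← h, LinearEquiv.apply_symm_apply]


end
end

section
/- Let ℓ, m ∈ ℤ≥1, a ∈ ℂ∖{0}, 0 ≤ ν ≤ min{ℓ,m}, and n = ℓ+m−2ν. In the U'_q(L(sl₂))-module V(ℓ,a) ⊗ V(m), the vectors x̃ₙ satisfy Δ(E₀⁺)x̃ₙ = aq·x̃_{n+2}, where x̃_{ℓ+m+2} is interpreted as 0. -/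
open scoped TensorProduct

noncomputable section

/-- `Δ(K₀) = K₀ ⊗ K₀` on `V(ℓ,a) ⊗ V(m,b)`. -/
def dK0 (q : ℂ) (ℓ m : ℕ) :
    Module.End ℂ (TensorProduct ℂ (Fin (ℓ + 1) → ℂ) (Fin (m + 1) → ℂ)) :=
  TensorProduct.map (evalK0 q ℓ) (evalK0 q m)

/-- `Δ(K₁) = K₁ ⊗ K₁` on `V(ℓ,a) ⊗ V(m,b)`. -/
def dK1 (q : ℂ) (ℓ m : ℕ) :
    Module.End ℂ (TensorProduct ℂ (Fin (ℓ + 1) → ℂ) (Fin (m + 1) → ℂ)) :=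
  TensorProduct.map (evalK1 q ℓ) (evalK1 q m)

/-- `Δ(E₀⁺) = K₀ ⊗ E₀⁺ + E₀⁺ ⊗ 1` on `V(ℓ,a) ⊗ V(m,b)`. -/
def dE0 (q : ℂ) (ℓ m : ℕ) (a b : ℂ) :
    Module.End ℂ (TensorProduct ℂ (Fin (ℓ + 1) → ℂ) (Fin (m + 1) → ℂ)) :=
  TensorProduct.map (evalK0 q ℓ) (evalE0 q b m) +
    TensorProduct.map (evalE0 q a ℓ) LinearMap.id

/-- `Δ(E₁⁺) = K₁ ⊗ E₁⁺ + E₁⁺ ⊗ 1` on `V(ℓ,a) ⊗ V(m,b)`. -/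
def dE1p (q : ℂ) (ℓ m : ℕ) :
    Module.End ℂ (TensorProduct ℂ (Fin (ℓ + 1) → ℂ) (Fin (m + 1) → ℂ)) :=
  TensorProduct.map (evalK1 q ℓ) (evalE1p q m) +
    TensorProduct.map (evalE1p q ℓ) LinearMap.id

/-- `Δ(E₁⁻) = 1 ⊗ E₁⁻ + E₁⁻ ⊗ K₁⁻¹` on `V(ℓ,a) ⊗ V(m,b)` (note `K₁⁻¹ = K₀`). -/
def dE1m (q : ℂ) (ℓ m : ℕ) :
    Module.End ℂ (TensorProduct ℂ (Fin (ℓ + 1) → ℂ) (Fin (m + 1) → ℂ)) :=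
  TensorProduct.map LinearMap.id (evalE1m q m) +
    TensorProduct.map (evalE1m q ℓ) (evalK0 q m)

/-- A linear map intertwines the five structure operators of two
`U'_q(L(sl₂))`-module structures. -/
def IntertwinesAll {V W : Type*} [AddCommGroup V] [Module ℂ V] [AddCommGroup W] [Module ℂ W]
    (σ : V →ₗ[ℂ] W) (A0 A1p A1m AK0 AK1 : Module.End ℂ V)
    (B0 B1p B1m BK0 BK1 : Module.End ℂ W) : Prop :=
  σ ∘ₗ A0 = B0 ∘ₗ σ ∧ σ ∘ₗ A1p = B1p ∘ₗ σ ∧ σ ∘ₗ A1m = B1m ∘ₗ σ ∧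
    σ ∘ₗ AK0 = BK0 ∘ₗ σ ∧ σ ∘ₗ AK1 = BK1 ∘ₗ σ

/-- The lowest weight vector `x̃ₙ`, `n = ℓ+m-2ν`, of the `ν`-th Clebsch-Gordan component
of `V(ℓ,a) ⊗ V(m)`; defined to be `0` for `ν` out of range. -/
def xt (q : ℂ) (ℓ m : ℕ) (ν : ℤ) :
    TensorProduct ℂ (Fin (ℓ + 1) → ℂ) (Fin (m + 1) → ℂ) :=
  if h : 0 ≤ ν ∧ ν ≤ ℓ ∧ ν ≤ m then
    ∑ j : Fin (ν.toNat + 1),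
      ((-1) ^ (j : ℕ) * q ^ ((j : ℕ) * (m - (j : ℕ) + 1)) *
          qfac q (ℓ - ν.toNat + (j : ℕ)) * qfac q (m - (j : ℕ))) •
        (Pi.single (⟨ℓ - ν.toNat + (j : ℕ), by have := j.isLt; omega⟩ : Fin (ℓ + 1)) (1 : ℂ)
          ⊗ₜ[ℂ] Pi.single (⟨m - (j : ℕ), by have := j.isLt; omega⟩ : Fin (m + 1)) (1 : ℂ))
  else 0

lemma evalE0_zero (q : ℂ) (m : ℕ) : evalE0 q 0 m = 0 := by
  have : (Matrix.of fun j i : Fin (m + 1) =>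
      if (j : ℕ) = (i : ℕ) + 1 then (0:ℂ) * q * qnum q ((i : ℤ) + 1) else 0) = 0 := by
    ext j i
    simp
  rw [evalE0, this, Matrix.mulVecLin_zero]

lemma evalE0_single (q a : ℂ) (ℓ : ℕ) (i : Fin (ℓ + 1)) (h : (i : ℕ) < ℓ) :
    evalE0 q a ℓ (Pi.single i 1) =
      (a * q * qnum q ((i : ℤ) + 1)) •
        (Pi.single (⟨(i : ℕ) + 1, by omega⟩ : Fin (ℓ + 1)) (1 : ℂ) : Fin (ℓ + 1) → ℂ) := by
  funext j
  simp only [evalE0, Matrix.mulVecLin_apply, Matrix.mulVec_single, Pi.smul_apply,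
    Pi.single_apply, smul_eq_mul]
  by_cases hj : j = (⟨(i : ℕ) + 1, by omega⟩ : Fin (ℓ + 1))
  · subst hj; simp [Matrix.of_apply, mul_one]
  · have : ¬ ((j : ℕ) = (i : ℕ) + 1) := fun hc => hj (Fin.ext hc)
    simp [Matrix.of_apply, this, if_neg hj]

lemma evalE0_single_top (q a : ℂ) (ℓ : ℕ) (i : Fin (ℓ + 1)) (h : (i : ℕ) = ℓ) :
    evalE0 q a ℓ (Pi.single i 1) = 0 := by
  funext j
  have : ¬ ((j : ℕ) = (i : ℕ) + 1) := by have := j.isLt; omega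
  simp [evalE0, Matrix.mulVecLin_apply, Matrix.mulVec_single, Matrix.of_apply, this]

lemma xt_eq (q : ℂ) (ℓ m ν : ℕ) (h1 : ν ≤ ℓ) (h2 : ν ≤ m) :
    xt q ℓ m ν = ∑ j : Fin (ν + 1),
      ((-1) ^ (j : ℕ) * q ^ ((j : ℕ) * (m - (j : ℕ) + 1)) *
          qfac q (ℓ - ν + (j : ℕ)) * qfac q (m - (j : ℕ))) •
        (Pi.single (⟨ℓ - ν + (j : ℕ), by have := j.isLt; omega⟩ : Fin (ℓ + 1)) (1 : ℂ)
          ⊗ₜ[ℂ] Pi.single (⟨m - (j : ℕ), by have := j.isLt; omega⟩ : Fin (m + 1)) (1 : ℂ)) := by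
  rw [xt, dif_pos (by omega)]
  rfl

lemma qfac_succ (q : ℂ) (t : ℕ) : qfac q (t + 1) = qfac q t * qnum q ((t : ℤ) + 1) := by
  rw [qfac, Finset.prod_range_succ, qfac]

/-- in `V(ℓ,a) ⊗ V(m)`, `Δ(E₀⁺) x̃ₙ = a q x̃ₙ₊₂`
(with `x̃_{ℓ+m+2} = 0`, i.e. `xt` at `ν - 1`). -/
theorem stmt14 (q : ℂ) (hq0 : q ≠ 0) (hq : ∀ n : ℕ, 0 < n → q ^ n ≠ 1)
    (ℓ m : ℕ) (hℓ : 1 ≤ ℓ) (hm : 1 ≤ m) (a : ℂ) (ha : a ≠ 0)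
    (ν : ℕ) (hνℓ : ν ≤ ℓ) (hνm : ν ≤ m) :
    dE0 q ℓ m a 0 (xt q ℓ m ν) = (a * q) • xt q ℓ m ((ν : ℤ) - 1) := by
  have hmap : dE0 q ℓ m a 0 = TensorProduct.map (evalE0 q a ℓ) LinearMap.id := by
    rw [dE0, evalE0_zero]
    ext x y
    simp
  rw [hmap]
  rcases Nat.eq_zero_or_pos ν with h0 | hpos
  · subst h0
    rw [xt_eq q ℓ m 0 (by omega) (by omega)]
    rw [show ((0 : ℕ) : ℤ) - 1 = (-1 : ℤ) by norm_num, xt, dif_neg (by omega), smul_zero]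
    rw [Fin.sum_univ_one, map_smul, TensorProduct.map_tmul,
      evalE0_single_top q a ℓ _ (by simp), TensorProduct.zero_tmul, smul_zero]
  · obtain ⟨ν', rfl⟩ := Nat.exists_eq_succ_of_ne_zero (n := ν) (by omega)
    rw [xt_eq q ℓ m (ν' + 1) hνℓ hνm,
      show ((ν' + 1 : ℕ) : ℤ) - 1 = ((ν' : ℕ) : ℤ) by push_cast; ring,
      xt_eq q ℓ m ν' (by omega) (by omega)]
    rw [map_sum, Fin.sum_univ_castSucc]
    have hlast : (TensorProduct.map (evalE0 q a ℓ) (LinearMap.id (R := ℂ)))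
        ((Pi.single (⟨ℓ - (ν' + 1) + ((Fin.last (ν' + 1) : Fin (ν' + 1 + 1)) : ℕ), by
            have := (Fin.last (ν' + 1)).isLt; omega⟩ : Fin (ℓ + 1)) (1 : ℂ) : Fin (ℓ + 1) → ℂ)
          ⊗ₜ[ℂ] (Pi.single (⟨m - ((Fin.last (ν' + 1) : Fin (ν' + 1 + 1)) : ℕ), by
            have := (Fin.last (ν' + 1)).isLt; omega⟩ : Fin (m + 1)) (1 : ℂ) : Fin (m + 1) → ℂ)) = 0 := by
      rw [TensorProduct.map_tmul,
        evalE0_single_top q a ℓ _ (by simp [Fin.last]; omega), TensorProduct.zero_tmul]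
    rw [map_smul, hlast, smul_zero, add_zero, Finset.smul_sum]
    refine Finset.sum_congr rfl fun j _ => ?_
    have hjc : ((j.castSucc : Fin (ν' + 1 + 1)) : ℕ) = (j : ℕ) := rfl
    have hlt : ℓ - (ν' + 1) + (j : ℕ) < ℓ := by have := j.isLt; omega
    rw [map_smul, TensorProduct.map_tmul, LinearMap.id_coe, id_eq,
      evalE0_single q a ℓ _ (by simpa using hlt)]
    rw [← TensorProduct.smul_tmul', smul_smul]
    have hidx : (⟨(((⟨ℓ - (ν' + 1) + ((j.castSucc : Fin (ν' + 1 + 1)) : ℕ), by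
          have := j.castSucc.isLt; omega⟩ : Fin (ℓ + 1)) : Fin (ℓ + 1)) : ℕ) + 1, by
          simpa using Nat.succ_lt_succ hlt⟩ : Fin (ℓ + 1)) =
        (⟨ℓ - ν' + (j : ℕ), by have := j.isLt; omega⟩ : Fin (ℓ + 1)) := by
      apply Fin.ext
      simp only [hjc]
      omega
    rw [hidx]
    have hscal : ((-1:ℂ) ^ (j:ℕ) * q ^ ((j:ℕ) * (m - (j:ℕ) + 1)) * qfac q (ℓ - (ν'+1) + (j:ℕ)) *
        qfac q (m - (j:ℕ)) * (a * q * qnum q (((ℓ - (ν'+1) + (j:ℕ) : ℕ) : ℤ) + 1))) =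
        a * q * ((-1:ℂ) ^ (j:ℕ) * q ^ ((j:ℕ) * (m - (j:ℕ) + 1)) * qfac q (ℓ - ν' + (j:ℕ)) *
        qfac q (m - (j:ℕ))) := by
      have ht : ℓ - ν' + (j : ℕ) = (ℓ - (ν' + 1) + (j : ℕ)) + 1 := by have := j.isLt; omega
      rw [ht, qfac_succ]
      ring
    simp only [Fin.coe_castSucc, Fin.val_mk]
    rw [hscal]
    simp [smul_smul]
    all_goals decide

end
end

section
/- Let ℓ, m ∈ ℤ≥1 and a ∈ ℂ∖{0}. Every nonzero subspace of V(ℓ,a) ⊗ V(m) invariant under all five operators Δ(E₀⁺), Δ(E₁⁺), Δ(E₁⁻), Δ(K₀), Δ(K₁) contains the vector x̃_{ℓ+m} = [ℓ]![m]! v_ℓ ⊗ v'_m (the lowest weight vector). -/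
open scoped TensorProduct

noncomputable section

/-! With `b = 0`, `Δ(E₀⁺)` acts as `E₀⁺ ⊗ 1`, and for `a ≠ 0` the operator `E₀⁺` on `V(ℓ,a)` is a
weighted shift `vᵢ ↦ cᵢ vᵢ₊₁` with nonzero weights: it is nilpotent with kernel `ℂ v_ℓ`. A nilpotent
operator preserving a nonzero subspace kills a nonzero vector of it, and since `V(m)` is flat the
kernel of `E₀⁺ ⊗ 1` is `v_ℓ ⊗ V(m)`; hence `W` contains some `v_ℓ ⊗ u` with `u ≠ 0`. As
`E₁⁻ v_ℓ = 0`, `Δ(E₁⁻)` acts on such vectors as `1 ⊗ E₁⁻`, again a weighted shift with nonzero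
weights, and the same argument applied to `{u | v_ℓ ⊗ u ∈ W}` puts `v_ℓ ⊗ v'_m` in `W`. -/

section Nilpotent

variable {R M : Type*} [Ring R] [AddCommGroup M] [Module R M]

lemma Module.End.exists_ne_zero_apply_eq_zero_of_isNilpotent [Nontrivial M]
    {f : Module.End R M} (hf : IsNilpotent f) : ∃ v : M, v ≠ 0 ∧ f v = 0 := by
  by_contra! hker
  obtain ⟨n, hn⟩ := hf
  obtain ⟨v, hv⟩ := exists_ne (0 : M)
  have hinj : Function.Injective (f ^ n) := by
    rw [Module.End.coe_pow]
    exact ((injective_iff_map_eq_zero f).mpr fun v hfv =>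
      by_contra fun hv => hker v hv hfv).iterate n
  exact hv (hinj (by rw [hn, LinearMap.zero_apply, LinearMap.zero_apply]))

lemma Submodule.exists_mem_ne_zero_apply_eq_zero_of_isNilpotent {f : Module.End R M}
    (hf : IsNilpotent f) {W : Submodule R M} (hW : W ≠ ⊥) (hfW : ∀ v ∈ W, f v ∈ W) :
    ∃ v ∈ W, v ≠ 0 ∧ f v = 0 := by
  have : Nontrivial W := Submodule.nontrivial_iff_ne_bot.mpr hW
  obtain ⟨v, hv0, hfv⟩ :=
    Module.End.exists_ne_zero_apply_eq_zero_of_isNilpotent (Module.End.isNilpotent.restrict hfW hf)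
  exact ⟨v, v.2, by simpa using hv0, by simpa using congrArg Subtype.val hfv⟩

lemma IsNilpotent.rTensor {R M : Type*} [CommRing R] [AddCommGroup M] [Module R M]
    (N : Type*) [AddCommGroup N] [Module R N] {f : Module.End R M} (hf : IsNilpotent f) :
    IsNilpotent (f.rTensor N) := by
  obtain ⟨n, hn⟩ := hf
  exact ⟨n, by rw [LinearMap.rTensor_pow, hn, LinearMap.rTensor_zero]⟩

end Nilpotent

section WeightedShift

variable {K : Type*} [Field K] {n : ℕ}

def weightedShift (c : Fin (n + 1) → K) : Module.End K (Fin (n + 1) → K) :=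
  (Matrix.of fun j i : Fin (n + 1) => if (j : ℕ) = (i : ℕ) + 1 then c i else 0).mulVecLin

variable (c : Fin (n + 1) → K)

lemma weightedShift_apply_zero (x : Fin (n + 1) → K) : weightedShift c x 0 = 0 := by
  simp [weightedShift, Matrix.mulVec, dotProduct]

lemma weightedShift_apply_succ (x : Fin (n + 1) → K) (i : Fin n) :
    weightedShift c x i.succ = c i.castSucc * x i.castSucc := by
  simp only [weightedShift, Matrix.mulVecLin_apply, Matrix.mulVec, dotProduct, Matrix.of_apply,
    Fin.val_succ, add_left_inj, ite_mul, zero_mul]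
  rw [Finset.sum_eq_single i.castSucc (fun j _ hj => if_neg fun h => hj (Fin.ext h.symm))
    (by simp)]
  simp

lemma weightedShift_pow_apply_of_lt (k : ℕ) (x : Fin (n + 1) → K) (j : Fin (n + 1))
    (hj : (j : ℕ) < k) : (weightedShift c ^ k) x j = 0 := by
  induction k generalizing j with
  | zero => exact absurd hj (Nat.not_lt_zero _)
  | succ k ih =>
    rw [pow_succ', Module.End.mul_apply]
    cases j using Fin.cases with
    | zero => exact weightedShift_apply_zero c _
    | succ i =>
      rw [weightedShift_apply_succ, ih _ (by simpa using hj), mul_zero]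

lemma isNilpotent_weightedShift : IsNilpotent (weightedShift c) :=
  ⟨n + 1, LinearMap.ext fun x => funext fun j =>
    weightedShift_pow_apply_of_lt c (n + 1) x j j.isLt⟩

lemma weightedShift_single_last (t : K) : weightedShift c (Pi.single (Fin.last n) t) = 0 := by
  funext j
  cases j using Fin.cases with
  | zero => exact weightedShift_apply_zero c _
  | succ i => simp [weightedShift_apply_succ, Fin.castSucc_ne_last]

variable {c}

lemma exact_single_last_weightedShift (hc : ∀ i : Fin n, c i.castSucc ≠ 0) :
    Function.Exact (LinearMap.single K (fun _ => K) (Fin.last n)) (weightedShift c) := by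
  intro x
  constructor
  · intro hx
    refine ⟨x (Fin.last n), funext fun j => ?_⟩
    cases j using Fin.lastCases with
    | last => simp
    | cast i =>
      have hxi := congrFun hx i.succ
      rw [weightedShift_apply_succ, Pi.zero_apply] at hxi
      simp [(mul_eq_zero.mp hxi).resolve_left (hc i), Fin.castSucc_ne_last]
  · rintro ⟨t, rfl⟩
    exact weightedShift_single_last c t

lemma single_last_mem_of_weightedShift (hc : ∀ i : Fin n, c i.castSucc ≠ 0)
    {W : Submodule K (Fin (n + 1) → K)} (hW : W ≠ ⊥) (hcW : ∀ v ∈ W, weightedShift c v ∈ W) :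
    Pi.single (Fin.last n) 1 ∈ W := by
  obtain ⟨v, hvW, hv0, hcv⟩ :=
    Submodule.exists_mem_ne_zero_apply_eq_zero_of_isNilpotent (isNilpotent_weightedShift c) hW hcW
  obtain ⟨t, rfl⟩ := (exact_single_last_weightedShift hc v).mp hcv
  have ht : t ≠ 0 := fun ht => hv0 (by simp [ht])
  simpa [← Pi.single_smul, ht] using W.smul_mem t⁻¹ hvW

lemma exists_single_last_tmul_mem_of_weightedShift {N : Type*} [AddCommGroup N] [Module K N]
    (hc : ∀ i : Fin n, c i.castSucc ≠ 0) {W : Submodule K ((Fin (n + 1) → K) ⊗[K] N)}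
    (hW : W ≠ ⊥) (hcW : ∀ w ∈ W, (weightedShift c).rTensor N w ∈ W) :
    ∃ u : N, u ≠ 0 ∧ Pi.single (Fin.last n) 1 ⊗ₜ[K] u ∈ W := by
  obtain ⟨w, hwW, hw0, hcw⟩ := Submodule.exists_mem_ne_zero_apply_eq_zero_of_isNilpotent
    ((isNilpotent_weightedShift c).rTensor N) hW hcW
  obtain ⟨t, rfl⟩ := (Module.Flat.rTensor_exact N (exact_single_last_weightedShift hc) w).mp hcw
  have ht : t = 1 ⊗ₜ TensorProduct.lid K N t := by
    rw [← TensorProduct.lid_symm_apply, LinearEquiv.symm_apply_apply]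
  rw [ht, LinearMap.rTensor_tmul] at hwW hw0
  exact ⟨TensorProduct.lid K N t, fun h => hw0 (by rw [h, TensorProduct.tmul_zero]), hwW⟩

end WeightedShift

section EvaluationModule

variable {q : ℂ}

lemma qnum_natCast_add_one_ne_zero (hq0 : q ≠ 0) (hq : ∀ n : ℕ, 0 < n → q ^ n ≠ 1) (k : ℕ) :
    qnum q ((k : ℤ) + 1) ≠ 0 := by
  have hdiff : ∀ j : ℕ, 0 < j → q ^ (j : ℤ) - q ^ (-(j : ℤ)) ≠ 0 := by
    intro j hj h
    have hinv : q ^ (-(j : ℤ)) * q ^ (j : ℤ) = 1 := by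
      rw [← zpow_add₀ hq0, neg_add_cancel, zpow_zero]
    rw [← sub_eq_zero.mp h] at hinv
    apply hq (2 * j) (by omega)
    rwa [pow_mul', sq, ← zpow_natCast]
  have hden := hdiff 1 one_pos
  rw [Nat.cast_one, zpow_one, zpow_neg_one] at hden
  exact div_ne_zero (by exact_mod_cast hdiff (k + 1) k.succ_pos) hden

lemma evalE0_eq_weightedShift (a : ℂ) (ℓ : ℕ) :
    evalE0 q a ℓ = weightedShift fun i => a * q * qnum q ((i : ℤ) + 1) := rfl

lemma evalE1m_eq_weightedShift (ℓ : ℕ) :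
    evalE1m q ℓ = weightedShift fun i => qnum q ((i : ℤ) + 1) := rfl

lemma dE0_zero_eq_rTensor (ℓ m : ℕ) (a : ℂ) :
    dE0 q ℓ m a 0 = (evalE0 q a ℓ).rTensor (Fin (m + 1) → ℂ) := by
  have hE0 : evalE0 q 0 m = 0 := by
    ext x j
    simp [evalE0_eq_weightedShift, weightedShift, Matrix.mulVec, dotProduct]
  rw [dE0, hE0, TensorProduct.map_zero_right, zero_add, LinearMap.rTensor]

lemma dE1m_single_last_tmul (ℓ m : ℕ) (u : Fin (m + 1) → ℂ) :
    dE1m q ℓ m (Pi.single (Fin.last ℓ) 1 ⊗ₜ u) = Pi.single (Fin.last ℓ) 1 ⊗ₜ evalE1m q m u := by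
  simp [dE1m, evalE1m_eq_weightedShift, weightedShift_single_last]

end EvaluationModule

theorem stmt15_general (q : ℂ) (hq0 : q ≠ 0) (hq : ∀ n : ℕ, 0 < n → q ^ n ≠ 1)
    (ℓ m : ℕ) (a : ℂ) (ha : a ≠ 0)
    (W : Submodule ℂ (TensorProduct ℂ (Fin (ℓ + 1) → ℂ) (Fin (m + 1) → ℂ)))
    (hW : W ≠ ⊥)
    (hE0 : ∀ v ∈ W, dE0 q ℓ m a 0 v ∈ W)
    (hE1m : ∀ v ∈ W, dE1m q ℓ m v ∈ W) :
    (qfac q ℓ * qfac q m) •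
      (Pi.single (Fin.last ℓ) (1 : ℂ) ⊗ₜ[ℂ] Pi.single (Fin.last m) (1 : ℂ)) ∈ W := by
  have hqnum := qnum_natCast_add_one_ne_zero hq0 hq
  rw [dE0_zero_eq_rTensor, evalE0_eq_weightedShift] at hE0
  obtain ⟨u, hu0, huW⟩ := exists_single_last_tmul_mem_of_weightedShift
    (c := fun i => a * q * qnum q ((i : ℤ) + 1))
    (fun i => mul_ne_zero (mul_ne_zero ha hq0) (hqnum i)) hW hE0
  let W' := W.comap (TensorProduct.mk ℂ _ (Fin (m + 1) → ℂ) (Pi.single (Fin.last ℓ) 1))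
  have hW' : W' ≠ ⊥ := (Submodule.ne_bot_iff W').mpr ⟨u, huW, hu0⟩
  have hE1m' : ∀ u ∈ W', weightedShift (fun i => qnum q ((i : ℤ) + 1)) u ∈ W' := fun u hu => by
    simpa [W', dE1m_single_last_tmul, evalE1m_eq_weightedShift] using hE1m _ hu
  exact W.smul_mem _ (single_last_mem_of_weightedShift (fun i => hqnum i) hW' hE1m')

/-- every nonzero invariant subspace of `V(ℓ,a) ⊗ V(m)` contains the
lowest weight vector `x̃_{ℓ+m} = [ℓ]! [m]! v_ℓ ⊗ v'_m`. -/
theorem stmt15 (q : ℂ) (hq0 : q ≠ 0) (hq : ∀ n : ℕ, 0 < n → q ^ n ≠ 1)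
    (ℓ m : ℕ) (hℓ : 1 ≤ ℓ) (hm : 1 ≤ m) (a : ℂ) (ha : a ≠ 0)
    (W : Submodule ℂ (TensorProduct ℂ (Fin (ℓ + 1) → ℂ) (Fin (m + 1) → ℂ)))
    (hW : W ≠ ⊥)
    (hE0 : ∀ v ∈ W, dE0 q ℓ m a 0 v ∈ W)
    (hE1p : ∀ v ∈ W, dE1p q ℓ m v ∈ W)
    (hE1m : ∀ v ∈ W, dE1m q ℓ m v ∈ W)
    (hK0 : ∀ v ∈ W, dK0 q ℓ m v ∈ W)
    (hK1 : ∀ v ∈ W, dK1 q ℓ m v ∈ W) :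
    (qfac q ℓ * qfac q m) •
      (Pi.single (Fin.last ℓ) (1 : ℂ) ⊗ₜ[ℂ] Pi.single (Fin.last m) (1 : ℂ)) ∈ W :=
  stmt15_general q hq0 hq ℓ m a ha W hW hE0 hE1m

end
end

section
/- Let ℓ, m ∈ ℤ≥1, a ∈ ℂ∖{0}, 0 ≤ ν ≤ min{ℓ,m}, and n = ℓ+m−2ν. In V(m) ⊗ V(ℓ,a), the vectors x̃'ₙ satisfy Δ(K₁)x̃'ₙ = q^{−n}x̃'ₙ, Δ(E₁⁻)x̃'ₙ = 0, and (E₁⁻ ⊗ 1)x̃'ₙ = x̃'_{n+2}, where E₁⁻ ⊗ 1 denotes the operator E₁⁻ of V(m) acting on the first tensor factor and x̃'_{ℓ+m+2} is interpreted as 0. -/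
open scoped TensorProduct

noncomputable section

/-- The lowest weight vector `x̃'ₙ`, `n = ℓ+m-2ν`, of the `ν`-th Clebsch-Gordan component
of `V(m) ⊗ V(ℓ,a)`; defined to be `0` for `ν` out of range. -/
def xt' (q : ℂ) (ℓ m : ℕ) (ν : ℤ) :
    TensorProduct ℂ (Fin (m + 1) → ℂ) (Fin (ℓ + 1) → ℂ) :=
  if h : 0 ≤ ν ∧ ν ≤ ℓ ∧ ν ≤ m then
    ∑ j : Fin (ν.toNat + 1),
      ((-1) ^ (j : ℕ) * q ^ ((j : ℕ) * (ℓ - (j : ℕ) + 1)) *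
          qfac q (m - ν.toNat + (j : ℕ)) * qfac q (ℓ - (j : ℕ))) •
        (Pi.single (⟨m - ν.toNat + (j : ℕ), by have := j.isLt; omega⟩ : Fin (m + 1)) (1 : ℂ)
          ⊗ₜ[ℂ] Pi.single (⟨ℓ - (j : ℕ), by have := j.isLt; omega⟩ : Fin (ℓ + 1)) (1 : ℂ))
  else 0

/-!
Each term `v'_{m-ν+j} ⊗ v_{ℓ-j}` of `x̃'ₙ` has `Δ(K₁)`-weight `q^(-n)`. Under
`Δ(E₁⁻) = 1 ⊗ E₁⁻ + E₁⁻ ⊗ K₁⁻¹` the two pieces land on the same basis vector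
`v'_{m-ν+j+1} ⊗ v_{ℓ-j}` from consecutive terms `j + 1` and `j`, and the coefficients of `x̃'ₙ`
are chosen so that these contributions cancel, while the extreme pieces vanish because
`v_{ℓ+1} = v'_{m+1} = 0`. Finally `E₁⁻ ⊗ 1` multiplies `[m-ν+j]!` by `[m-ν+j+1]`, which turns the
coefficients of `x̃'ₙ` into those of `x̃'ₙ₊₂`.
-/

def basisVec (N k : ℕ) : Fin (N + 1) → ℂ :=
  if h : k ≤ N then Pi.single ⟨k, Nat.lt_succ_of_le h⟩ 1 else 0

lemma basisVec_of_lt {N k : ℕ} (h : N < k) : basisVec N k = 0 := dif_neg (by omega)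

lemma evalK0_basisVec (q : ℂ) (N k : ℕ) :
    evalK0 q N (basisVec N k) = q ^ (2 * (k : ℤ) - N) • basisVec N k := by
  unfold basisVec
  split_ifs
  · ext i
    simp [evalK0, Matrix.mulVec_single, Pi.single_apply]
  · simp

lemma evalK1_basisVec (q : ℂ) (N k : ℕ) :
    evalK1 q N (basisVec N k) = q ^ ((N : ℤ) - 2 * k) • basisVec N k := by
  unfold basisVec
  split_ifs
  · ext i
    simp [evalK1, Matrix.mulVec_single, Pi.single_apply]
  · simp

lemma evalE1m_basisVec (q : ℂ) (N k : ℕ) :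
    evalE1m q N (basisVec N k) = qnum q ((k : ℤ) + 1) • basisVec N (k + 1) := by
  unfold basisVec
  split_ifs
  · ext i
    simp [evalE1m, Matrix.mulVec_single, Pi.single_apply, Fin.ext_iff]
  · ext i
    have : (i : ℕ) ≠ k + 1 := by omega
    simp [evalE1m, Matrix.mulVec_single, this]
  · omega
  · simp

/-- The coefficient of `v'_{m-ν+j} ⊗ v_{ℓ-j}` in `x̃'ₙ`. -/
def xtCoeff (q : ℂ) (ℓ m ν j : ℕ) : ℂ :=
  (-1) ^ j * q ^ (j * (ℓ - j + 1)) * qfac q (m - ν + j) * qfac q (ℓ - j)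

section xt'

variable (q : ℂ) (ℓ m : ℕ)

lemma xt'_of_neg {ν : ℤ} (hν : ν < 0) : xt' q ℓ m ν = 0 := dif_neg (by omega)

lemma xt'_eq_sum {ν : ℕ} (hνℓ : ν ≤ ℓ) (hνm : ν ≤ m) :
    xt' q ℓ m ν = ∑ j ∈ Finset.range (ν + 1),
      xtCoeff q ℓ m ν j • (basisVec m (m - ν + j) ⊗ₜ[ℂ] basisVec ℓ (ℓ - j)) := by
  rw [xt', dif_pos ⟨ν.cast_nonneg, by exact_mod_cast hνℓ, by exact_mod_cast hνm⟩,
    ← Fin.sum_univ_eq_sum_range]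
  refine Finset.sum_congr rfl fun j _ => ?_
  rw [basisVec, basisVec, dif_pos (by omega), dif_pos (by omega)]
  rfl

lemma dK1_xt' (hq0 : q ≠ 0) {ν : ℕ} (hνℓ : ν ≤ ℓ) (hνm : ν ≤ m) :
    dK1 q m ℓ (xt' q ℓ m ν) = (q ^ (ℓ + m - 2 * ν))⁻¹ • xt' q ℓ m ν := by
  rw [xt'_eq_sum q ℓ m hνℓ hνm, Finset.smul_sum, map_sum]
  refine Finset.sum_congr rfl fun j hj => ?_
  have hj : j ≤ ν := Finset.mem_range_succ_iff.mp hj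
  have hweight : q ^ ((m : ℤ) - 2 * ↑(m - ν + j)) * q ^ ((ℓ : ℤ) - 2 * ↑(ℓ - j)) =
      (q ^ (ℓ + m - 2 * ν))⁻¹ := by
    rw [← zpow_add₀ hq0, ← zpow_natCast, ← zpow_neg]
    congr 1
    omega
  rw [dK1, map_smul, TensorProduct.map_tmul, evalK1_basisVec, evalK1_basisVec,
    TensorProduct.smul_tmul_smul, smul_comm, hweight]

/-- The `(E₁⁻ ⊗ K₁⁻¹)`-image of the `j`-th term of `x̃'ₙ` cancels the `(1 ⊗ E₁⁻)`-image of the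
`(j+1)`-st one. -/
lemma xtCoeff_cancel (hq0 : q ≠ 0) (ν : ℕ) {j : ℕ} (hjℓ : j < ℓ) :
    xtCoeff q ℓ m ν (j + 1) * qnum q (↑(ℓ - (j + 1)) + 1) +
      xtCoeff q ℓ m ν j * (qnum q (↑(m - ν + j) + 1) * q ^ (2 * (↑(ℓ - j) : ℤ) - ℓ)) = 0 := by
  obtain ⟨B, hB⟩ : ∃ B, ℓ - j = B + 1 := ⟨ℓ - j - 1, by omega⟩
  have hpow : q ^ ((j + 1) * (B + 1)) =
      q ^ (j * (B + 2)) * q ^ (2 * ((B : ℤ) + 1) - ℓ) := by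
    rw [← zpow_natCast, ← zpow_natCast, ← zpow_add₀ hq0]
    congr 1
    push_cast
    rw [show (ℓ : ℤ) = j + B + 1 by omega]
    ring
  rw [xtCoeff, xtCoeff, show ℓ - (j + 1) = B by omega, show ℓ - j + 1 = B + 2 by omega,
    show m - ν + (j + 1) = m - ν + j + 1 by omega, hB, qfac_succ q (m - ν + j), qfac_succ q B,
    hpow]
  push_cast
  ring

lemma xtCoeff_pred {ν : ℕ} (j : ℕ) (hν : 1 ≤ ν) (hνm : ν ≤ m) :
    xtCoeff q ℓ m ν j * qnum q (↑(m - ν + j) + 1) = xtCoeff q ℓ m (ν - 1) j := by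
  rw [xtCoeff, xtCoeff, show m - (ν - 1) + j = m - ν + j + 1 by omega, qfac_succ]
  ring

lemma dE1m_xt' (hq0 : q ≠ 0) {ν : ℕ} (hνℓ : ν ≤ ℓ) (hνm : ν ≤ m) :
    dE1m q m ℓ (xt' q ℓ m ν) = 0 := by
  set t : ℕ → (Fin (m + 1) → ℂ) ⊗[ℂ] (Fin (ℓ + 1) → ℂ) := fun j =>
    xtCoeff q ℓ m ν j • (basisVec m (m - ν + j) ⊗ₜ[ℂ] basisVec ℓ (ℓ - j))
  set F := TensorProduct.map (LinearMap.id : Module.End ℂ (Fin (m + 1) → ℂ)) (evalE1m q ℓ)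
  set G := TensorProduct.map (evalE1m q m) (evalK0 q ℓ)
  have hF_first : F (t 0) = 0 := by
    simp only [t, F, map_smul, TensorProduct.map_tmul, evalE1m_basisVec,
      basisVec_of_lt (show ℓ < ℓ - 0 + 1 by omega), smul_zero, TensorProduct.tmul_zero]
  have hG_last : G (t ν) = 0 := by
    simp only [t, G, map_smul, TensorProduct.map_tmul, evalE1m_basisVec,
      basisVec_of_lt (show m < m - ν + ν + 1 by omega), smul_zero, TensorProduct.zero_tmul]
  have hpair : ∀ j < ν, F (t (j + 1)) + G (t j) = 0 := fun j hj => by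
    simp only [t, F, G]
    rw [map_smul, map_smul, TensorProduct.map_tmul, TensorProduct.map_tmul, LinearMap.id_apply,
      evalE1m_basisVec, evalE1m_basisVec, evalK0_basisVec, show ℓ - (j + 1) + 1 = ℓ - j by omega,
      show m - ν + (j + 1) = m - ν + j + 1 by omega, TensorProduct.tmul_smul,
      TensorProduct.smul_tmul_smul, smul_smul, smul_smul, ← add_smul,
      xtCoeff_cancel q ℓ m hq0 ν (by omega), zero_smul]
  rw [xt'_eq_sum q ℓ m hνℓ hνm, map_sum, dE1m]
  simp only [LinearMap.add_apply]
  rw [Finset.sum_add_distrib, Finset.sum_range_succ', Finset.sum_range_succ (fun j => G (t j)),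
    hF_first, hG_last, add_zero, add_zero, ← Finset.sum_add_distrib]
  exact Finset.sum_eq_zero fun j hj => hpair j (Finset.mem_range.mp hj)

lemma map_evalE1m_id_xt' {ν : ℕ} (hνℓ : ν ≤ ℓ) (hνm : ν ≤ m) :
    TensorProduct.map (evalE1m q m) LinearMap.id (xt' q ℓ m ν) = xt' q ℓ m ((ν : ℤ) - 1) := by
  rw [xt'_eq_sum q ℓ m hνℓ hνm, map_sum, Finset.sum_range_succ, map_smul,
    TensorProduct.map_tmul, evalE1m_basisVec, basisVec_of_lt (show m < m - ν + ν + 1 by omega)]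
  simp only [smul_zero, TensorProduct.zero_tmul, add_zero]
  obtain rfl | hν := Nat.eq_zero_or_pos ν
  · simp [xt'_of_neg]
  · rw [show (ν : ℤ) - 1 = ((ν - 1 : ℕ) : ℤ) by omega, xt'_eq_sum q ℓ m (by omega) (by omega),
      Nat.sub_add_cancel hν]
    refine Finset.sum_congr rfl fun j _ => ?_
    rw [map_smul, TensorProduct.map_tmul, LinearMap.id_apply, evalE1m_basisVec,
      ← TensorProduct.smul_tmul', smul_smul, xtCoeff_pred q ℓ m j hν hνm,
      show m - (ν - 1) + j = m - ν + j + 1 by omega]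

end xt'

theorem stmt16_general (q : ℂ) (hq0 : q ≠ 0) (ℓ m : ℕ) (ν : ℕ) (hνℓ : ν ≤ ℓ) (hνm : ν ≤ m) :
    dK1 q m ℓ (xt' q ℓ m ν) = (q ^ (ℓ + m - 2 * ν))⁻¹ • xt' q ℓ m ν ∧
    dE1m q m ℓ (xt' q ℓ m ν) = 0 ∧
    TensorProduct.map (evalE1m q m)
        (LinearMap.id : (Fin (ℓ + 1) → ℂ) →ₗ[ℂ] (Fin (ℓ + 1) → ℂ)) (xt' q ℓ m ν) =
      xt' q ℓ m ((ν : ℤ) - 1) :=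
  ⟨dK1_xt' q ℓ m hq0 hνℓ hνm, dE1m_xt' q ℓ m hq0 hνℓ hνm, map_evalE1m_id_xt' q ℓ m hνℓ hνm⟩

/-- in `V(m) ⊗ V(ℓ,a)`, `Δ(K₁) x̃'ₙ = q^(-n) x̃'ₙ`, `Δ(E₁⁻) x̃'ₙ = 0`, and
`(E₁⁻ ⊗ 1) x̃'ₙ = x̃'ₙ₊₂` (with `x̃'_{ℓ+m+2} = 0`, i.e. `xt'` at `ν - 1`). -/
theorem stmt16 (q : ℂ) (hq0 : q ≠ 0) (hq : ∀ n : ℕ, 0 < n → q ^ n ≠ 1)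
    (ℓ m : ℕ) (hℓ : 1 ≤ ℓ) (hm : 1 ≤ m) (a : ℂ) (ha : a ≠ 0)
    (ν : ℕ) (hνℓ : ν ≤ ℓ) (hνm : ν ≤ m) :
    dK1 q m ℓ (xt' q ℓ m ν) = (q ^ (ℓ + m - 2 * ν))⁻¹ • xt' q ℓ m ν ∧
    dE1m q m ℓ (xt' q ℓ m ν) = 0 ∧
    TensorProduct.map (evalE1m q m)
        (LinearMap.id : (Fin (ℓ + 1) → ℂ) →ₗ[ℂ] (Fin (ℓ + 1) → ℂ)) (xt' q ℓ m ν) =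
      xt' q ℓ m ((ν : ℤ) - 1) :=
  stmt16_general q hq0 ℓ m ν hνℓ hνm

end
end
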